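/- arXiv:1908.03774 — 6 statements merged into one kernel-verified Lean document; each statement's English description precedes it below -/
import Mathlib

section
/- Let 𝒜 be a vector lattice of real-valued functions on a set X containing the constant function 1. For any f₁, …, f_m ∈ 𝒜 and open intervals U₁, …, U_m ⊆ ℝ (possibly unbounded), there exists a pointwise increasing sequence of [0,1]-valued functions in 𝒜 converging pointwise to the characteristic function of ⋂_{i=1}^m f_i⁻¹(U_i), such that the support of each function in the sequence is contained in ⋂_{i=1}^m f_i⁻¹(U_i). -/
open Filter Set Function

lemma my_classify {U : Set ℝ} (hU : IsOpen U) (hc : OrdConnected U) :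
    U = ∅ ∨ U = univ ∨ (∃ a, U = Ioi a) ∨ (∃ b, U = Iio b) ∨ (∃ a b, U = Ioo a b) := by
  rcases eq_empty_or_nonempty U with h | hne
  · exact Or.inl h
  right
  have hInf : BddBelow U → sInf U ∉ U := by
    intro hb ha
    obtain ⟨l, u, hmem, hsub⟩ := mem_nhds_iff_exists_Ioo_subset.mp (hU.mem_nhds ha)
    obtain ⟨c, hc1, hc2⟩ := exists_between hmem.1
    exact absurd (csInf_le hb (hsub ⟨hc1, hc2.trans hmem.2⟩)) (not_le.2 hc2)
  have hSup : BddAbove U → sSup U ∉ U := by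
    intro hb ha
    obtain ⟨l, u, hmem, hsub⟩ := mem_nhds_iff_exists_Ioo_subset.mp (hU.mem_nhds ha)
    obtain ⟨c, hc1, hc2⟩ := exists_between hmem.2
    exact absurd (le_csSup hb (hsub ⟨hmem.1.trans hc1, hc2⟩)) (not_le.2 hc1)
  by_cases hb : BddBelow U <;> by_cases hB : BddAbove U
  · -- Ioo
    right; right; right
    refine ⟨sInf U, sSup U, Subset.antisymm ?_ ?_⟩
    · intro x hx
      exact ⟨lt_of_le_of_ne (csInf_le hb hx) (fun e => hInf hb (e ▸ hx)),
        lt_of_le_of_ne (le_csSup hB hx) (fun e => hSup hB (e.symm ▸ hx))⟩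
    · intro x hx
      obtain ⟨u, hu, hux⟩ := (csInf_lt_iff hb hne).mp hx.1
      obtain ⟨v, hv, hxv⟩ := (lt_csSup_iff hB hne).mp hx.2
      exact hc.out hu hv ⟨hux.le, hxv.le⟩
  · -- Ioi
    right; left
    refine ⟨sInf U, Subset.antisymm ?_ ?_⟩
    · intro x hx
      exact lt_of_le_of_ne (csInf_le hb hx) (fun e => hInf hb (e ▸ hx))
    · intro x hx
      obtain ⟨u, hu, hux⟩ := (csInf_lt_iff hb hne).mp hx
      obtain ⟨v, hv, hxv⟩ := not_bddAbove_iff.mp hB x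
      exact hc.out hu hv ⟨hux.le, hxv.le⟩
  · -- Iio
    right; right; left
    refine ⟨sSup U, Subset.antisymm ?_ ?_⟩
    · intro x hx
      exact lt_of_le_of_ne (le_csSup hB hx) (fun e => hSup hB (e.symm ▸ hx))
    · intro x hx
      obtain ⟨v, hv, hxv⟩ := (lt_csSup_iff hB hne).mp hx
      obtain ⟨u, hu, hux⟩ := not_bddBelow_iff.mp hb x
      exact hc.out hu hv ⟨hux.le, hxv.le⟩
  · -- univ
    left
    refine eq_univ_of_forall fun x => ?_
    obtain ⟨u, hu, hux⟩ := not_bddBelow_iff.mp hb x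
    obtain ⟨v, hv, hxv⟩ := not_bddAbove_iff.mp hB x
    exact hc.out hu hv ⟨hux.le, hxv.le⟩

noncomputable def myφ (n : ℕ) (t : ℝ) : ℝ := max 0 (min 1 ((n : ℝ) * t))

lemma myφ_nonneg (n : ℕ) (t : ℝ) : 0 ≤ myφ n t := le_max_left _ _

lemma myφ_le_one (n : ℕ) (t : ℝ) : myφ n t ≤ 1 :=
  max_le zero_le_one (min_le_left _ _)

lemma myφ_eq_zero {t : ℝ} (ht : t ≤ 0) (n : ℕ) : myφ n t = 0 := by
  have h : (n : ℝ) * t ≤ 0 := mul_nonpos_of_nonneg_of_nonpos (Nat.cast_nonneg n) ht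
  simp only [myφ]
  rw [min_eq_right (h.trans zero_le_one), max_eq_left h]

lemma myφ_mono (t : ℝ) : Monotone fun n => myφ n t := by
  intro n m hnm
  rcases le_or_gt t 0 with ht | ht
  · simp only []; rw [myφ_eq_zero ht]; exact myφ_nonneg _ _
  · simp only []; exact max_le_max le_rfl (min_le_min le_rfl
      (mul_le_mul_of_nonneg_right (Nat.cast_le.2 hnm) ht.le))

lemma myφ_pos_of_ne {n : ℕ} {t : ℝ} (h : myφ n t ≠ 0) : 0 < t := by
  by_contra h'
  exact h (myφ_eq_zero (not_lt.mp h') n)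

lemma myφ_tendsto (t : ℝ) :
    Tendsto (fun n => myφ n t) atTop (nhds (if 0 < t then 1 else 0)) := by
  rcases lt_or_ge 0 t with ht | ht
  · rw [if_pos ht]
    refine tendsto_const_nhds.congr' ?_
    filter_upwards [eventually_ge_atTop ⌈t⁻¹⌉₊] with n hn
    have h1 : t⁻¹ ≤ (n : ℝ) := (Nat.le_ceil _).trans (Nat.cast_le.2 hn)
    have h2 : 1 ≤ (n : ℝ) * t := by
      calc (1 : ℝ) = t⁻¹ * t := (inv_mul_cancel₀ ht.ne').symm
      _ ≤ (n : ℝ) * t := mul_le_mul_of_nonneg_right h1 ht.le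
    simp only [myφ]
    rw [min_eq_left h2, max_eq_right zero_le_one]
  · rw [if_neg (not_lt.2 ht)]
    simp only [myφ_eq_zero ht]
    exact tendsto_const_nhds

noncomputable section

def myGood {X : Type*} (𝒜 : Set (X → ℝ)) (S : Set X) (g : ℕ → X → ℝ) : Prop :=
  (∀ n, g n ∈ 𝒜) ∧
  (∀ x, Monotone fun n => g n x) ∧
  (∀ n x, g n x ∈ Set.Icc (0 : ℝ) 1) ∧
  (∀ n, Function.support (g n) ⊆ S) ∧
  (∀ x, Tendsto (fun n => g n x) atTop (nhds (Set.indicator S (fun _ => (1 : ℝ)) x)))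

variable {X : Type*} {𝒜 : Set (X → ℝ)}
variable (h1 : (fun _ => (1 : ℝ)) ∈ 𝒜)
    (hadd : ∀ f ∈ 𝒜, ∀ g ∈ 𝒜, f + g ∈ 𝒜)
    (hsmul : ∀ (c : ℝ), ∀ f ∈ 𝒜, c • f ∈ 𝒜)
    (hmax : ∀ f ∈ 𝒜, ∀ g ∈ 𝒜, f ⊔ g ∈ 𝒜)
    (hmin : ∀ f ∈ 𝒜, ∀ g ∈ 𝒜, f ⊓ g ∈ 𝒜)

section
include h1 hsmul

lemma myGood_univ : myGood 𝒜 univ (fun _ _ => 1) := by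
  refine ⟨fun _ => h1, fun x => monotone_const, fun n x => ⟨zero_le_one, le_rfl⟩,
    fun n => subset_univ _, fun x => ?_⟩
  simp only [indicator_univ]
  exact tendsto_const_nhds

lemma myGood_empty : myGood 𝒜 ∅ (fun _ _ => 0) := by
  have h0 : (fun _ : X => (0:ℝ)) ∈ 𝒜 := by
    have := hsmul 0 _ h1
    rw [zero_smul] at this; exact this
  refine ⟨fun _ => h0, fun x => monotone_const, fun n x => ⟨le_rfl, zero_le_one⟩,
    fun n x hx => absurd rfl hx, fun x => ?_⟩
  simp only [indicator_empty]
  exact tendsto_const_nhds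

include hadd hmax hmin

lemma myφ_comp_mem {e : X → ℝ} (he : e ∈ 𝒜) (n : ℕ) :
    (fun x => myφ n (e x)) ∈ 𝒜 := by
  have h0 : (fun _ : X => (0:ℝ)) ∈ 𝒜 := by have := hsmul 0 _ h1; rw [zero_smul] at this; exact this
  have : (fun x => myφ n (e x)) =
      ((((n : ℝ) • e) ⊓ (fun _ => 1)) ⊔ (fun _ => 0)) := by
    funext x
    simp only [Pi.sup_apply, Pi.inf_apply, Pi.smul_apply, smul_eq_mul, myφ]
    rw [max_comm, min_comm]
  rw [this]
  exact hmax _ (hmin _ (hsmul _ _ he) _ h1) _ h0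

lemma myGood_Ioi {f : X → ℝ} (hf : f ∈ 𝒜) (a : ℝ) :
    myGood 𝒜 (f ⁻¹' Ioi a) (fun n x => myφ n (f x - a)) := by
  have he : (fun x => f x - a) ∈ 𝒜 := by
    have := hadd _ hf _ (hsmul (-a) _ h1)
    convert this using 1
    funext x; simp; ring
  refine ⟨fun n => myφ_comp_mem h1 hadd hsmul hmax hmin he n,
    fun x => myφ_mono _, fun n x => ⟨myφ_nonneg _ _, myφ_le_one _ _⟩,
    fun n x hx => ?_, fun x => ?_⟩
  · exact mem_preimage.2 (mem_Ioi.2 (sub_pos.mp (myφ_pos_of_ne hx)))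
  · have := myφ_tendsto (f x - a)
    convert this using 2
    classical
    rw [indicator_apply]
    by_cases hx : x ∈ f ⁻¹' Ioi a
    · rw [if_pos hx, if_pos (sub_pos.2 hx)]
    · rw [if_neg hx, if_neg (fun h => hx (mem_preimage.2 (mem_Ioi.2 (sub_pos.mp h))))]

end

include hmin in
lemma myGood_inter {S T : Set X} {g h : ℕ → X → ℝ}
    (hg : myGood 𝒜 S g) (hh : myGood 𝒜 T h) :
    myGood 𝒜 (S ∩ T) (fun n x => min (g n x) (h n x)) := by
  obtain ⟨hg1, hg2, hg3, hg4, hg5⟩ := hg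
  obtain ⟨hh1, hh2, hh3, hh4, hh5⟩ := hh
  refine ⟨fun n => ?_, fun x => (hg2 x).min (hh2 x),
    fun n x => ⟨le_min (hg3 n x).1 (hh3 n x).1, (min_le_left _ _).trans (hg3 n x).2⟩,
    fun n x hx => ?_, fun x => ?_⟩
  · have := hmin _ (hg1 n) _ (hh1 n)
    convert this using 1
    rfl
  · have hgx : g n x ≠ 0 := by
      intro e
      exact hx (le_antisymm ((min_le_left _ _).trans_eq e) (le_min (hg3 n x).1 (hh3 n x).1))
    have hhx : h n x ≠ 0 := by
      intro e
      exact hx (le_antisymm ((min_le_right _ _).trans_eq e) (le_min (hg3 n x).1 (hh3 n x).1))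
    exact ⟨hg4 n hgx, hh4 n hhx⟩
  · have := (hg5 x).min (hh5 x)
    convert this using 2
    by_cases hS : x ∈ S <;> by_cases hT : x ∈ T <;>
      simp [indicator_apply, hS, hT]

end

section
variable {X : Type*} {𝒜 : Set (X → ℝ)}
variable (h1 : (fun _ => (1 : ℝ)) ∈ 𝒜)
    (hadd : ∀ f ∈ 𝒜, ∀ g ∈ 𝒜, f + g ∈ 𝒜)
    (hsmul : ∀ (c : ℝ), ∀ f ∈ 𝒜, c • f ∈ 𝒜)
    (hmax : ∀ f ∈ 𝒜, ∀ g ∈ 𝒜, f ⊔ g ∈ 𝒜)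
    (hmin : ∀ f ∈ 𝒜, ∀ g ∈ 𝒜, f ⊓ g ∈ 𝒜)

include h1 hadd hsmul hmax hmin

lemma myGood_Iio {f : X → ℝ} (hf : f ∈ 𝒜) (b : ℝ) :
    ∃ g, myGood 𝒜 (f ⁻¹' Iio b) g := by
  have hpre : f ⁻¹' Iio b = ((-1 : ℝ) • f) ⁻¹' Ioi (-b) := by
    ext x
    simp [neg_lt_neg_iff]
  rw [hpre]
  exact ⟨_, myGood_Ioi h1 hadd hsmul hmax hmin (hsmul (-1) _ hf) (-b)⟩

lemma myGood_single {f : X → ℝ} (hf : f ∈ 𝒜) {U : Set ℝ}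
    (hUo : IsOpen U) (hUc : U.OrdConnected) :
    ∃ g, myGood 𝒜 (f ⁻¹' U) g := by
  rcases my_classify hUo hUc with h | h | ⟨a, h⟩ | ⟨b, h⟩ | ⟨a, b, h⟩
  · rw [h, preimage_empty]
    exact ⟨_, myGood_empty h1 hsmul⟩
  · rw [h, preimage_univ]
    exact ⟨_, myGood_univ h1 hsmul⟩
  · rw [h]
    exact ⟨_, myGood_Ioi h1 hadd hsmul hmax hmin hf a⟩
  · rw [h]
    exact myGood_Iio h1 hadd hsmul hmax hmin hf b
  · rw [h]
    obtain ⟨g2, hg2⟩ := myGood_Iio h1 hadd hsmul hmax hmin hf b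
    have h3 := myGood_inter hmin (myGood_Ioi h1 hadd hsmul hmax hmin hf a) hg2
    rw [← preimage_inter, Ioi_inter_Iio] at h3
    exact ⟨_, h3⟩

lemma myGood_iInter : ∀ (m : ℕ) (f : Fin m → X → ℝ), (∀ i, f i ∈ 𝒜) →
    ∀ (U : Fin m → Set ℝ), (∀ i, IsOpen (U i)) → (∀ i, (U i).OrdConnected) →
    ∃ g, myGood 𝒜 (⋂ i, (f i) ⁻¹' (U i)) g := by
  intro m
  induction m with
  | zero =>
    intro f hf U hUo hUc
    rw [iInter_of_empty]
    exact ⟨_, myGood_univ h1 hsmul⟩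
  | succ m IH =>
    intro f hf U hUo hUc
    obtain ⟨g2, hg2⟩ := IH (fun i : Fin m => f i.succ) (fun i => hf _)
      (fun i : Fin m => U i.succ) (fun i => hUo _) (fun i => hUc _)
    obtain ⟨g1, hg1⟩ := myGood_single h1 hadd hsmul hmax hmin (hf 0) (hUo 0) (hUc 0)
    have key : (⋂ i, (f i) ⁻¹' (U i)) =
        (f 0 ⁻¹' U 0) ∩ ⋂ i : Fin m, (f i.succ) ⁻¹' (U i.succ) := by
      ext x
      simp only [mem_iInter, mem_inter_iff, mem_preimage]
      exact ⟨fun h => ⟨h 0, fun i => h i.succ⟩, fun ⟨h0, hs⟩ i => Fin.cases h0 hs i⟩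
    rw [key]
    exact ⟨_, myGood_inter hmin hg1 hg2⟩

end

theorem stmt_2 {X : Type*} (𝒜 : Set (X → ℝ))
    (h1 : (fun _ => (1 : ℝ)) ∈ 𝒜)
    (hadd : ∀ f ∈ 𝒜, ∀ g ∈ 𝒜, f + g ∈ 𝒜)
    (hsmul : ∀ (c : ℝ), ∀ f ∈ 𝒜, c • f ∈ 𝒜)
    (hmax : ∀ f ∈ 𝒜, ∀ g ∈ 𝒜, f ⊔ g ∈ 𝒜)
    (hmin : ∀ f ∈ 𝒜, ∀ g ∈ 𝒜, f ⊓ g ∈ 𝒜)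
    (m : ℕ) (f : Fin m → X → ℝ) (hf : ∀ i, f i ∈ 𝒜)
    (U : Fin m → Set ℝ) (hUopen : ∀ i, IsOpen (U i))
    (hUint : ∀ i, (U i).OrdConnected) :
    ∃ g : ℕ → X → ℝ,
      (∀ n, g n ∈ 𝒜) ∧
      (∀ x, Monotone fun n => g n x) ∧
      (∀ n x, g n x ∈ Set.Icc (0 : ℝ) 1) ∧
      (∀ n, Function.support (g n) ⊆ ⋂ i, (f i) ⁻¹' (U i)) ∧
      (∀ x, Tendsto (fun n => g n x) atTop
        (nhds (Set.indicator (⋂ i, (f i) ⁻¹' (U i)) (fun _ => (1 : ℝ)) x))) :=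
  myGood_iInter h1 hadd hsmul hmax hmin m f hf U hUopen hUint
end

section
/- Let 𝒜 be a vector lattice of real-valued functions on a set X containing 1_X. For any f₁, …, f_m ∈ 𝒜 and closed intervals U₁, …, U_m ⊆ ℝ (possibly degenerate single points), there exists a pointwise decreasing sequence of [0,1]-valued functions in 𝒜 converging pointwise to the characteristic function of ⋃_{i=1}^m f_i⁻¹(U_i), such that each function in the sequence equals 1 on ⋃_{i=1}^m f_i⁻¹(U_i). -/
open Filter Set Function

/-- Characterization of membership in a nonempty closed ord-connected subset of ℝ. -/
lemma mem_closed_ordConn_iff {U : Set ℝ} (hc : IsClosed U) (ho : U.OrdConnected)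
    (hne : U.Nonempty) (t : ℝ) :
    t ∈ U ↔ (BddBelow U → sInf U ≤ t) ∧ (BddAbove U → t ≤ sSup U) := by
  constructor
  · exact fun ht => ⟨fun hb => csInf_le hb ht, fun ha => le_csSup ha ht⟩
  · rintro ⟨hlb, hub⟩
    by_cases hb : BddBelow U <;> by_cases ha : BddAbove U
    · exact ho.out (hc.csInf_mem hne hb) (hc.csSup_mem hne ha) ⟨hlb hb, hub ha⟩
    · obtain ⟨u, hu, htu⟩ := not_bddAbove_iff.mp ha t
      exact ho.out (hc.csInf_mem hne hb) hu ⟨hlb hb, htu.le⟩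
    · obtain ⟨l, hl, hlt⟩ := not_bddBelow_iff.mp hb t
      exact ho.out hl (hc.csSup_mem hne ha) ⟨hlt.le, hub ha⟩
    · obtain ⟨u, hu, htu⟩ := not_bddAbove_iff.mp ha t
      obtain ⟨l, hl, hlt⟩ := not_bddBelow_iff.mp hb t
      exact ho.out hl hu ⟨hlt.le, htu.le⟩

lemma exists_single {X : Type*} (𝒜 : Set (X → ℝ))
    (h1 : (fun _ => (1 : ℝ)) ∈ 𝒜)
    (hadd : ∀ f ∈ 𝒜, ∀ g ∈ 𝒜, f + g ∈ 𝒜)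
    (hsmul : ∀ (c : ℝ), ∀ f ∈ 𝒜, c • f ∈ 𝒜)
    (hmax : ∀ f ∈ 𝒜, ∀ g ∈ 𝒜, f ⊔ g ∈ 𝒜)
    (f : X → ℝ) (hf : f ∈ 𝒜) (U : Set ℝ) (hUc : IsClosed U) (hUo : U.OrdConnected) :
    ∃ h ∈ 𝒜, (∀ x, 0 ≤ h x) ∧ ∀ x, (h x = 0 ↔ f x ∈ U) := by
  have hconst : ∀ c : ℝ, (fun _ : X => c) ∈ 𝒜 := by
    intro c
    have := hsmul c _ h1
    simpa [Pi.smul_def] using this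
  have haff : ∀ a b : ℝ, (fun x => a * f x + b) ∈ 𝒜 := by
    intro a b
    have := hadd _ (hsmul a f hf) _ (hconst b)
    simpa [Pi.add_def, Pi.smul_def] using this
  rcases eq_empty_or_nonempty U with hU | hne
  · refine ⟨fun _ => 1, hconst 1, fun x => zero_le_one, fun x => ?_⟩
    simp [hU]
  · have hA : (fun x => sInf U - f x) ∈ 𝒜 := by
      have := haff (-1) (sInf U)
      convert this using 1; funext x; ring
    have hB : (fun x => f x - sSup U) ∈ 𝒜 := by
      have := haff 1 (-sSup U)
      convert this using 1; funext x; ring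
    by_cases hb : BddBelow U <;> by_cases ha : BddAbove U
    · refine ⟨((fun x => sInf U - f x) ⊔ (fun x => f x - sSup U)) ⊔ (fun _ => 0),
        hmax _ (hmax _ hA _ hB) _ (hconst 0), fun x => le_max_right _ _, fun x => ?_⟩
      rw [mem_closed_ordConn_iff hUc hUo hne]
      simp only [Pi.sup_apply]
      constructor
      · intro h
        have h1' : sInf U - f x ≤ 0 := by
          have := le_max_left (max (sInf U - f x) (f x - sSup U)) 0
          nlinarith [le_max_left (sInf U - f x) (f x - sSup U),
            le_max_left (max (sInf U - f x) (f x - sSup U)) (0:ℝ)]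
        have h2' : f x - sSup U ≤ 0 := by
          nlinarith [le_max_right (sInf U - f x) (f x - sSup U),
            le_max_left (max (sInf U - f x) (f x - sSup U)) (0:ℝ)]
        exact ⟨fun _ => by linarith, fun _ => by linarith⟩
      · rintro ⟨hi, hs⟩
        have := hi hb; have := hs ha
        rw [max_eq_right]
        rw [max_le_iff]; constructor <;> linarith
    · refine ⟨(fun x => sInf U - f x) ⊔ (fun _ => 0),
        hmax _ hA _ (hconst 0), fun x => le_max_right _ _, fun x => ?_⟩
      rw [mem_closed_ordConn_iff hUc hUo hne]
      simp only [Pi.sup_apply]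
      constructor
      · intro h
        have h1' : sInf U - f x ≤ 0 := by
          nlinarith [le_max_left (sInf U - f x) (0:ℝ)]
        exact ⟨fun _ => by linarith, fun h' => absurd h' ha⟩
      · rintro ⟨hi, _⟩
        have := hi hb
        rw [max_eq_right]; linarith
    · refine ⟨(fun x => f x - sSup U) ⊔ (fun _ => 0),
        hmax _ hB _ (hconst 0), fun x => le_max_right _ _, fun x => ?_⟩
      rw [mem_closed_ordConn_iff hUc hUo hne]
      simp only [Pi.sup_apply]
      constructor
      · intro h
        have h1' : f x - sSup U ≤ 0 := by
          nlinarith [le_max_left (f x - sSup U) (0:ℝ)]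
        exact ⟨fun h' => absurd h' hb, fun _ => by linarith⟩
      · rintro ⟨_, hs⟩
        have := hs ha
        rw [max_eq_right]; linarith
    · refine ⟨fun _ => 0, hconst 0, fun x => le_refl 0, fun x => ?_⟩
      rw [mem_closed_ordConn_iff hUc hUo hne]
      exact ⟨fun _ => ⟨fun h => absurd h hb, fun h => absurd h ha⟩, fun _ => rfl⟩

lemma exists_phi {X : Type*} (𝒜 : Set (X → ℝ))
    (h1 : (fun _ => (1 : ℝ)) ∈ 𝒜)
    (hadd : ∀ f ∈ 𝒜, ∀ g ∈ 𝒜, f + g ∈ 𝒜)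
    (hsmul : ∀ (c : ℝ), ∀ f ∈ 𝒜, c • f ∈ 𝒜)
    (hmax : ∀ f ∈ 𝒜, ∀ g ∈ 𝒜, f ⊔ g ∈ 𝒜)
    (hmin : ∀ f ∈ 𝒜, ∀ g ∈ 𝒜, f ⊓ g ∈ 𝒜) :
    ∀ (m : ℕ) (f : Fin m → X → ℝ), (∀ i, f i ∈ 𝒜) →
    ∀ (U : Fin m → Set ℝ), (∀ i, IsClosed (U i)) → (∀ i, (U i).OrdConnected) →
    ∃ φ ∈ 𝒜, (∀ x, 0 ≤ φ x) ∧ ∀ x, (φ x = 0 ↔ x ∈ ⋃ i, (f i) ⁻¹' (U i)) := by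
  intro m
  induction m with
  | zero =>
    intro f hf U hUc hUo
    refine ⟨fun _ => 1, by simpa using hsmul 1 _ h1, fun _ => zero_le_one, fun x => ?_⟩
    simp
  | succ m ih =>
    intro f hf U hUc hUo
    obtain ⟨φ', hφ'𝒜, hφ'0, hφ'⟩ := ih (fun i => f i.succ) (fun i => hf i.succ)
      (fun i => U i.succ) (fun i => hUc i.succ) (fun i => hUo i.succ)
    obtain ⟨h, hh𝒜, hh0, hh⟩ := exists_single 𝒜 h1 hadd hsmul hmax (f 0) (hf 0) (U 0)
      (hUc 0) (hUo 0)
    refine ⟨h ⊓ φ', hmin _ hh𝒜 _ hφ'𝒜, fun x => le_min (hh0 x) (hφ'0 x), fun x => ?_⟩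
    have hmem : x ∈ ⋃ i, (f i) ⁻¹' (U i) ↔ f 0 x ∈ U 0 ∨ x ∈ ⋃ i : Fin m, (f i.succ) ⁻¹' (U i.succ) := by
      simp [mem_iUnion, Fin.exists_fin_succ]
    rw [hmem, ← hh x, ← hφ' x]
    simp only [Pi.inf_apply]
    constructor
    · intro hz
      rcases min_choice (h x) (φ' x) with hc | hc <;> rw [hc] at hz
      · exact Or.inl hz
      · exact Or.inr hz
    · rintro (hz | hz)
      · rw [hz, min_eq_left (hφ'0 x)]
      · rw [hz, min_eq_right (hh0 x)]

theorem stmt_3 {X : Type*} (𝒜 : Set (X → ℝ))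
    (h1 : (fun _ => (1 : ℝ)) ∈ 𝒜)
    (hadd : ∀ f ∈ 𝒜, ∀ g ∈ 𝒜, f + g ∈ 𝒜)
    (hsmul : ∀ (c : ℝ), ∀ f ∈ 𝒜, c • f ∈ 𝒜)
    (hmax : ∀ f ∈ 𝒜, ∀ g ∈ 𝒜, f ⊔ g ∈ 𝒜)
    (hmin : ∀ f ∈ 𝒜, ∀ g ∈ 𝒜, f ⊓ g ∈ 𝒜)
    (m : ℕ) (f : Fin m → X → ℝ) (hf : ∀ i, f i ∈ 𝒜)
    (U : Fin m → Set ℝ) (hUclosed : ∀ i, IsClosed (U i))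
    (hUint : ∀ i, (U i).OrdConnected) :
    ∃ g : ℕ → X → ℝ,
      (∀ n, g n ∈ 𝒜) ∧
      (∀ x, Antitone fun n => g n x) ∧
      (∀ n x, g n x ∈ Set.Icc (0 : ℝ) 1) ∧
      (∀ n, ∀ x ∈ ⋃ i, (f i) ⁻¹' (U i), g n x = 1) ∧
      (∀ x, Tendsto (fun n => g n x) atTop
        (nhds (Set.indicator (⋃ i, (f i) ⁻¹' (U i)) (fun _ => (1 : ℝ)) x))) := by
  obtain ⟨φ, hφ𝒜, hφ0, hφ⟩ := exists_phi 𝒜 h1 hadd hsmul hmax hmin m f hf U hUclosed hUint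
  have hconst : ∀ c : ℝ, (fun _ : X => c) ∈ 𝒜 := by
    intro c
    have := hsmul c _ h1
    simpa [Pi.smul_def] using this
  set g : ℕ → X → ℝ := fun n => ((fun _ => (1:ℝ)) + (-(n:ℝ)) • φ) ⊔ (fun _ => 0) with hg
  have hgval : ∀ n x, g n x = max (1 - (n:ℝ) * φ x) 0 := by
    intro n x
    simp [hg, Pi.sup_apply, Pi.add_apply, Pi.smul_apply, smul_eq_mul]
    ring_nf
  refine ⟨g, ?_, ?_, ?_, ?_, ?_⟩
  · intro n
    exact hmax _ (hadd _ h1 _ (hsmul _ _ hφ𝒜)) _ (hconst 0)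
  · intro x n n' hnn'
    show g n' x ≤ g n x
    rw [hgval, hgval]
    apply max_le_max _ le_rfl
    have : (n:ℝ) ≤ (n':ℝ) := Nat.cast_le.mpr hnn'
    nlinarith [hφ0 x]
  · intro n x
    rw [hgval]
    constructor
    · exact le_max_right _ _
    · apply max_le _ zero_le_one
      nlinarith [hφ0 x, (n.cast_nonneg : (0:ℝ) ≤ n)]
  · intro n x hx
    rw [hgval, ((hφ x).mpr hx)]
    simp
  · intro x
    by_cases hx : x ∈ ⋃ i, (f i) ⁻¹' (U i)
    · have : ∀ n, g n x = 1 := fun n => by rw [hgval, (hφ x).mpr hx]; simp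
      simp only [this, indicator_of_mem hx]
      exact tendsto_const_nhds
    · have hpos : 0 < φ x := lt_of_le_of_ne (hφ0 x) (fun h => hx ((hφ x).mp h.symm))
      rw [indicator_of_notMem hx]
      apply Tendsto.congr' _ tendsto_const_nhds
      obtain ⟨N, hN⟩ := exists_nat_ge (1 / φ x)
      filter_upwards [eventually_ge_atTop N] with n hn
      rw [hgval]
      have h1' : (1:ℝ) ≤ (n:ℝ) * φ x := by
        have : (1/φ x) ≤ (n:ℝ) := le_trans hN (Nat.cast_le.mpr hn)
        rw [div_le_iff₀ hpos] at this
        linarith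
      rw [max_eq_right]; linarith
end

section
/- Let 𝒜 be a vector lattice of real functions on X containing 1_X, and I a positive linear functional on 𝒜 with I(1_X) ≠ 0. For any f ∈ 𝒜 and any nonempty open interval (r,s) ⊆ ℝ, there exists α ∈ (r,s) which is an inessential value of f with respect to I, i.e., the limit of I applied to the decreasing sequence corresponding to α for f is zero. -/
open Filter Set Function

lemma aux_pt (a α K : ℝ) (hK : 0 < K) :
    min (K * (min a α - min a (α - 1 / K))) (K * (max a (α + 1 / K) - max a α))
      = max (1 - K * |a - α|) 0 := by
  have hKe : K * (1 / K) = 1 := by field_simp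
  have hε : 0 < 1 / K := by positivity
  rcases le_total a α with h | h
  · rw [min_eq_left h, max_eq_right h, max_eq_right (by linarith : α + 1/K ≥ a),
      abs_of_nonpos (by linarith : a - α ≤ 0)]
    rcases le_total a (α - 1/K) with h2 | h2
    · rw [min_eq_left h2]
      rw [min_eq_left (by nlinarith : K * (a - a) ≤ K * (α + 1/K - α)),
        max_eq_right (by nlinarith : 1 - K * -(a - α) ≤ 0)]
      ring
    · rw [min_eq_right h2]
      have e1 : K * (a - (α - 1/K)) = 1 - K * -(a - α) := by
        have : K * (a - (α - 1/K)) = K * (a - α) + K * (1/K) := by ring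
        rw [this, hKe]; ring
      have e2 : K * (α + 1/K - α) = 1 := by rw [show α + 1/K - α = 1/K by ring, hKe]
      rw [e1, e2, min_eq_left (by nlinarith : 1 - K * -(a - α) ≤ 1),
        max_eq_left (by nlinarith : (0:ℝ) ≤ 1 - K * -(a - α))]
  · rw [min_eq_right h, max_eq_left h, min_eq_right (by linarith : α - 1/K ≤ a),
      abs_of_nonneg (by linarith : 0 ≤ a - α)]
    rcases le_total (α + 1/K) a with h2 | h2
    · rw [max_eq_left h2]
      rw [min_eq_right (by nlinarith : K * (a - a) ≤ K * (α - (α - 1/K))),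
        max_eq_right (by nlinarith : 1 - K * (a - α) ≤ 0)]
      ring
    · rw [max_eq_right h2]
      have e1 : K * (α + 1/K - a) = 1 - K * (a - α) := by
        have : K * (α + 1/K - a) = K * (α - a) + K * (1/K) := by ring
        rw [this, hKe]; ring
      have e2 : K * (α - (α - 1/K)) = 1 := by
        rw [show α - (α - 1/K) = 1/K by ring, hKe]
      rw [e1, e2, min_eq_right (by nlinarith : 1 - K * (a - α) ≤ 1),
        max_eq_left (by nlinarith : (0:ℝ) ≤ 1 - K * (a - α))]

/-- clamp-type bump function -/
def Gaux {X : Type*} (f : X → ℝ) (α : ℝ) (n : ℕ) : X → ℝ :=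
  fun x => max (1 - ((n:ℝ)+1) * |f x - α|) 0

/-- smoothed indicator of `{f ≤ t}` -/
def Haux {X : Type*} (f : X → ℝ) (t : ℝ) (n : ℕ) : X → ℝ :=
  fun x => min (max (((n:ℝ)+1) * (t - f x) + 1) 0) 1

section ptwise
variable {X : Type*} {f : X → ℝ} {α t t1 t2 : ℝ} {n m : ℕ} {x : X}

lemma Gaux_nonneg : 0 ≤ Gaux f α n x := le_max_right _ _

lemma Gaux_le_one : Gaux f α n x ≤ 1 := by
  have h1 : (0:ℝ) ≤ ((n:ℝ)+1) * |f x - α| := by positivity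
  exact max_le (by linarith) zero_le_one

lemma Gaux_anti (h : n ≤ m) : Gaux f α m x ≤ Gaux f α n x := by
  have h1 : ((n:ℝ)+1) ≤ ((m:ℝ)+1) := by
    have := (Nat.cast_le (α := ℝ)).2 h; linarith
  have h2 : (0:ℝ) ≤ |f x - α| := abs_nonneg _
  exact max_le_max (by nlinarith) le_rfl

lemma Haux_nonneg : 0 ≤ Haux f t n x := le_min (le_max_right _ _) zero_le_one

lemma Haux_mono (h : t1 ≤ t2) : Haux f t1 n x ≤ Haux f t2 n x := by
  have : ((n:ℝ)+1) * (t1 - f x) + 1 ≤ ((n:ℝ)+1) * (t2 - f x) + 1 := by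
    have h1 : (0:ℝ) ≤ (n:ℝ)+1 := by positivity
    nlinarith
  exact min_le_min (max_le_max this le_rfl) le_rfl

lemma Haux_anti (h : n ≤ m) : Haux f t m x ≤ Haux f t n x := by
  have h1 : ((n:ℝ)+1) ≤ ((m:ℝ)+1) := by
    have := (Nat.cast_le (α := ℝ)).2 h; linarith
  rcases le_total (f x) t with h2 | h2
  · have e : ∀ k : ℕ, n ≤ k → Haux f t k x = 1 := by
      intro k hk
      have : (1:ℝ) ≤ ((k:ℝ)+1) * (t - f x) + 1 := by
        have : (0:ℝ) ≤ ((k:ℝ)+1) * (t - f x) := mul_nonneg (by positivity) (by linarith)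
        linarith
      unfold Haux
      rw [min_eq_right (le_trans this (le_max_left _ _))]
    rw [e n le_rfl, e m h]
  · have : ((m:ℝ)+1) * (t - f x) + 1 ≤ ((n:ℝ)+1) * (t - f x) + 1 := by nlinarith
    exact min_le_min (max_le_max this le_rfl) le_rfl

lemma key_ptwise (h1 : t1 + 1/((m:ℝ)+1) ≤ α - 1/((n:ℝ)+1)) (h2 : α + 1/((n:ℝ)+1) ≤ t2) :
    Gaux f α n x + Haux f t1 m x ≤ Haux f t2 m x := by
  have hεn : (0:ℝ) < 1/((n:ℝ)+1) := by positivity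
  have hεm : (0:ℝ) < 1/((m:ℝ)+1) := by positivity
  have hne : ((n:ℝ)+1) * (1/((n:ℝ)+1)) = 1 := by field_simp
  have hme : ((m:ℝ)+1) * (1/((m:ℝ)+1)) = 1 := by field_simp
  by_cases hc : 1/((n:ℝ)+1) ≤ |f x - α|
  · have hG : Gaux f α n x = 0 := by
      unfold Gaux
      rw [max_eq_right]
      have : (1:ℝ) = ((n:ℝ)+1) * (1/((n:ℝ)+1)) := hne.symm
      have h4 : ((n:ℝ)+1) * (1/((n:ℝ)+1)) ≤ ((n:ℝ)+1) * |f x - α| := by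
        apply mul_le_mul_of_nonneg_left hc; positivity
      linarith
    rw [hG, zero_add]
    exact Haux_mono (by linarith)
  · push_neg at hc
    obtain ⟨hlo, hhi⟩ := abs_lt.1 hc
    have hH2 : Haux f t2 m x = 1 := by
      have ha : f x ≤ t2 := by linarith
      have : (1:ℝ) ≤ ((m:ℝ)+1) * (t2 - f x) + 1 := by
        have : (0:ℝ) ≤ ((m:ℝ)+1) * (t2 - f x) := mul_nonneg (by positivity) (by linarith)
        linarith
      unfold Haux
      rw [min_eq_right (le_trans this (le_max_left _ _))]
    have hH1 : Haux f t1 m x = 0 := by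
      have ha : t1 + 1/((m:ℝ)+1) ≤ f x := by linarith
      have : ((m:ℝ)+1) * (t1 - f x) + 1 ≤ 0 := by
        have h4 : ((m:ℝ)+1) * (t1 - f x) ≤ ((m:ℝ)+1) * (-(1/((m:ℝ)+1))) := by
          apply mul_le_mul_of_nonneg_left (by linarith); positivity
        rw [mul_neg, hme] at h4
        linarith
      unfold Haux
      rw [max_eq_right this, min_eq_left zero_le_one]
    rw [hH1, hH2, add_zero]
    exact Gaux_le_one

end ptwise

lemma memA_of_eq {X : Type*} {𝒜 : Set (X → ℝ)} {g h : X → ℝ} (hg : g ∈ 𝒜) (e : g = h) :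
    h ∈ 𝒜 := e ▸ hg

theorem stmt_5 {X : Type*} (𝒜 : Set (X → ℝ))
    (h1 : (fun _ => (1 : ℝ)) ∈ 𝒜)
    (hadd : ∀ f ∈ 𝒜, ∀ g ∈ 𝒜, f + g ∈ 𝒜)
    (hsmul : ∀ (c : ℝ), ∀ f ∈ 𝒜, c • f ∈ 𝒜)
    (hmax : ∀ f ∈ 𝒜, ∀ g ∈ 𝒜, f ⊔ g ∈ 𝒜)
    (hmin : ∀ f ∈ 𝒜, ∀ g ∈ 𝒜, f ⊓ g ∈ 𝒜)
    (I : (X → ℝ) → ℝ)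
    (hIadd : ∀ f ∈ 𝒜, ∀ g ∈ 𝒜, I (f + g) = I f + I g)
    (hIsmul : ∀ (c : ℝ), ∀ f ∈ 𝒜, I (c • f) = c * I f)
    (hIpos : ∀ f ∈ 𝒜, (∀ x, 0 ≤ f x) → 0 ≤ I f)
    (hI1 : I (fun _ => (1 : ℝ)) ≠ 0)
    (f : X → ℝ) (hf : f ∈ 𝒜) (r s : ℝ) (hrs : r < s) :
    ∃ α ∈ Set.Ioo r s,
      Tendsto (fun n : ℕ => I (fun x =>
        min (((n : ℝ) + 1) * (min (f x) α - min (f x) (α - 1 / ((n : ℝ) + 1))))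
            (((n : ℝ) + 1) * (max (f x) (α + 1 / ((n : ℝ) + 1)) - max (f x) α))))
        atTop (nhds 0) := by
  classical
  -- constants are in 𝒜
  have hconst : ∀ c : ℝ, (fun _ : X => c) ∈ 𝒜 := fun c =>
    memA_of_eq (hsmul c _ h1) (by funext x; simp)
  -- I is monotone
  have hImono : ∀ g ∈ 𝒜, ∀ h ∈ 𝒜, (∀ x, g x ≤ h x) → I g ≤ I h := by
    intro g hg h hh hle
    have hd : h + (-1:ℝ) • g ∈ 𝒜 := hadd _ hh _ (hsmul (-1) _ hg)
    have h0 : 0 ≤ I (h + (-1:ℝ) • g) := by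
      apply hIpos _ hd
      intro x
      simp only [Pi.add_apply, Pi.smul_apply, smul_eq_mul]
      linarith [hle x]
    have e : g + (h + (-1:ℝ) • g) = h := by
      funext x; simp only [Pi.add_apply, Pi.smul_apply, smul_eq_mul]; ring
    have := hIadd _ hg _ hd
    rw [e] at this
    linarith
  -- membership of Gaux
  have m1 : (fun x => f x) ∈ 𝒜 := hf
  have hGmem : ∀ (α : ℝ) (n : ℕ), Gaux f α n ∈ 𝒜 := by
    intro α n
    have m1 : (fun x => f x - α) ∈ 𝒜 :=
      memA_of_eq (hadd f hf _ (hconst (-α))) (by funext x; simp [sub_eq_add_neg])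
    have m2 : (fun x => |f x - α|) ∈ 𝒜 := by
      refine memA_of_eq (hmax _ m1 _ (hsmul (-1) _ m1)) ?_
      funext x
      simp only [Pi.sup_apply, Pi.smul_apply, smul_eq_mul, neg_one_mul]
      exact (abs_eq_max_neg (a := f x - α)).symm
    have m3 : (fun x => 1 - ((n:ℝ)+1) * |f x - α|) ∈ 𝒜 := by
      refine memA_of_eq (hadd _ (hconst 1) _ (hsmul (-(((n:ℝ)+1))) _ m2)) ?_
      funext x
      simp only [Pi.add_apply, Pi.smul_apply, smul_eq_mul]
      ring
    refine memA_of_eq (hmax _ m3 _ (hconst 0)) ?_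
    funext x
    simp only [Pi.sup_apply]
    rfl
  -- membership of Haux
  have hHmem : ∀ (t : ℝ) (n : ℕ), Haux f t n ∈ 𝒜 := by
    intro t n
    have p1 : (fun x => ((n:ℝ)+1) * (t - f x) + 1) ∈ 𝒜 := by
      refine memA_of_eq (hadd _ (hsmul (-(((n:ℝ)+1))) _ hf) _ (hconst (((n:ℝ)+1)*t + 1))) ?_
      funext x
      simp only [Pi.add_apply, Pi.smul_apply, smul_eq_mul]
      ring
    have p2 : (fun x => max (((n:ℝ)+1) * (t - f x) + 1) 0) ∈ 𝒜 := by
      refine memA_of_eq (hmax _ p1 _ (hconst 0)) ?_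
      funext x
      simp only [Pi.sup_apply]
    refine memA_of_eq (hmin _ p2 _ (hconst 1)) ?_
    funext x
    simp only [Pi.inf_apply]
    rfl
  -- boundedness and antitonicity
  have hGbdd : ∀ α : ℝ, BddBelow (range fun n => I (Gaux f α n)) := by
    intro α
    refine ⟨0, ?_⟩
    rintro _ ⟨n, rfl⟩
    exact hIpos _ (hGmem α n) fun x => Gaux_nonneg
  have hGanti : ∀ α : ℝ, Antitone fun n => I (Gaux f α n) := by
    intro α a b hab
    exact hImono _ (hGmem α b) _ (hGmem α a) fun x => Gaux_anti hab
  have hHbdd : ∀ t : ℝ, BddBelow (range fun n => I (Haux f t n)) := by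
    intro t
    refine ⟨0, ?_⟩
    rintro _ ⟨n, rfl⟩
    exact hIpos _ (hHmem t n) fun x => Haux_nonneg
  have hHanti : ∀ t : ℝ, Antitone fun n => I (Haux f t n) := by
    intro t a b hab
    exact hImono _ (hHmem t b) _ (hHmem t a) fun x => Haux_anti hab
  have hLtend : ∀ α : ℝ, Tendsto (fun n => I (Gaux f α n)) atTop
      (nhds (⨅ n, I (Gaux f α n))) := fun α => tendsto_atTop_ciInf (hGanti α) (hGbdd α)
  have hφtend : ∀ t : ℝ, Tendsto (fun n => I (Haux f t n)) atTop
      (nhds (⨅ n, I (Haux f t n))) := fun t => tendsto_atTop_ciInf (hHanti t) (hHbdd t)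
  set φ : ℝ → ℝ := fun t => ⨅ n, I (Haux f t n) with hφdef
  have hφmono : Monotone φ := by
    intro t1 t2 h12
    exact ciInf_mono (hHbdd t1) fun n =>
      hImono _ (hHmem t1 n) _ (hHmem t2 n) fun x => Haux_mono h12
  -- key inequality
  have hkey : ∀ t1 α t2 : ℝ, t1 < α → α < t2 →
      (⨅ n, I (Gaux f α n)) + φ t1 ≤ φ t2 := by
    intro t1 α t2 ha hb
    refine ge_of_tendsto (hφtend t2) ?_
    obtain ⟨n, hn⟩ := exists_nat_one_div_lt
      (lt_min (by linarith : (0:ℝ) < (α - t1)/2) (by linarith : (0:ℝ) < t2 - α))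
    rw [lt_min_iff] at hn
    obtain ⟨M, hM⟩ := exists_nat_one_div_lt (show (0:ℝ) < (α - t1)/2 by linarith)
    filter_upwards [eventually_ge_atTop M] with m hm
    have hδ : 1/((m:ℝ)+1) ≤ 1/((M:ℝ)+1) := by
      apply one_div_le_one_div_of_le
      · positivity
      · have := (Nat.cast_le (α := ℝ)).2 hm; linarith
    have hc1 : t1 + 1/((m:ℝ)+1) ≤ α - 1/((n:ℝ)+1) := by linarith [hn.1]
    have hc2 : α + 1/((n:ℝ)+1) ≤ t2 := by linarith [hn.2]
    have hsum : Gaux f α n + Haux f t1 m ∈ 𝒜 := hadd _ (hGmem α n) _ (hHmem t1 m)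
    calc (⨅ k, I (Gaux f α k)) + φ t1
        ≤ I (Gaux f α n) + I (Haux f t1 m) :=
          add_le_add (ciInf_le (hGbdd α) n) (ciInf_le (hHbdd t1) m)
      _ = I (Gaux f α n + Haux f t1 m) := (hIadd _ (hGmem α n) _ (hHmem t1 m)).symm
      _ ≤ I (Haux f t2 m) :=
          hImono _ hsum _ (hHmem t2 m) fun x => key_ptwise hc1 hc2
  -- pick a continuity point of φ in (r, s)
  have hcnt : Set.Countable {t | ¬ContinuousAt φ t} := hφmono.countable_not_continuousAt
  have hunc : ¬ (Set.Ioo r s).Countable := by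
    intro h
    have h2 : Cardinal.mk (Set.Ioo r s) ≤ Cardinal.aleph0 := Cardinal.mk_le_aleph0_iff.2 h.to_subtype
    rw [Cardinal.mk_Ioo_real hrs] at h2
    exact Cardinal.aleph0_lt_continuum.not_ge h2
  have hex : ∃ α ∈ Set.Ioo r s, ContinuousAt φ α := by
    by_contra hcon
    push_neg at hcon
    exact hunc (hcnt.mono fun t ht => hcon t ht)
  obtain ⟨α, hαmem, hαcont⟩ := hex
  -- the infimum vanishes at α
  have hL0 : (⨅ n, I (Gaux f α n)) = 0 := by
    have hnn : 0 ≤ ⨅ n, I (Gaux f α n) :=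
      le_ciInf fun n => hIpos _ (hGmem α n) fun x => Gaux_nonneg
    refine le_antisymm ?_ hnn
    by_contra hpos
    push_neg at hpos
    rw [Metric.continuousAt_iff] at hαcont
    set L := ⨅ n, I (Gaux f α n)
    obtain ⟨δ, hδ, hcont⟩ := hαcont (L/4) (by linarith)
    have e1 : dist (α - δ/2) α < δ := by
      rw [Real.dist_eq]
      rw [show α - δ/2 - α = -(δ/2) by ring, abs_neg, abs_of_pos (by linarith)]
      linarith
    have e2 : dist (α + δ/2) α < δ := by
      rw [Real.dist_eq]
      rw [show α + δ/2 - α = δ/2 by ring, abs_of_pos (by linarith)]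
      linarith
    have d1 := hcont e1
    have d2 := hcont e2
    rw [Real.dist_eq] at d1 d2
    have d1' := abs_lt.1 d1
    have d2' := abs_lt.1 d2
    have key := hkey (α - δ/2) α (α + δ/2) (by linarith) (by linarith)
    have : L ≤ φ (α + δ/2) - φ (α - δ/2) := by linarith
    linarith [d1'.1, d1'.2, d2'.1, d2'.2]
  refine ⟨α, hαmem, ?_⟩
  have heq : (fun n : ℕ => I (fun x =>
      min (((n : ℝ) + 1) * (min (f x) α - min (f x) (α - 1 / ((n : ℝ) + 1))))
          (((n : ℝ) + 1) * (max (f x) (α + 1 / ((n : ℝ) + 1)) - max (f x) α))))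
      = fun n => I (Gaux f α n) := by
    funext n
    congr 1
    funext x
    exact aux_pt (f x) α ((n:ℝ)+1) (by positivity)
  rw [heq]
  have := hLtend α
  rwa [hL0] at this
end

section
/- Let 𝒜 be a vector lattice of real functions on X containing 1_X, and I a positive linear functional on 𝒜 with I(1_X) ≠ 0. For any finite family f₁, …, f_t ∈ 𝒜 and any nonempty open interval (r,s), there exists α ∈ (r,s) that is simultaneously an inessential value of each f_i with respect to I. -/
open Filter Set Function

private lemma tent_eq (y a c e : ℝ) (he : 0 < e) (hce : c * e = 1) :
    min (c * (min y a - min y (a - e))) (c * (max y (a + e) - max y a))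
      = max 0 (1 - c * |y - a|) := by
  have hc : 0 < c := by nlinarith
  rcases le_total y a with h | h
  · rw [min_eq_left h, max_eq_right h, max_eq_right (by linarith : y ≤ a + e),
      abs_of_nonpos (by linarith : y - a ≤ 0)]
    rcases le_total y (a - e) with h2 | h2
    · rw [min_eq_left h2]
      have h3 : 1 - c * -(y - a) ≤ 0 := by nlinarith
      rw [max_eq_left h3]
      have : c * (y - y) = 0 := by ring
      rw [this, min_eq_left (by nlinarith)]
    · rw [min_eq_right h2]
      have hA1 : c * (y - (a - e)) ≤ c * e := by nlinarith
      rw [min_eq_left (by nlinarith), max_eq_right (by nlinarith)]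
      linear_combination hce
  · rw [min_eq_right h, max_eq_left h, min_eq_right (by linarith : a - e ≤ y),
      abs_of_nonneg (by linarith : 0 ≤ y - a)]
    rcases le_total (a + e) y with h2 | h2
    · rw [max_eq_left h2]
      have : c * (y - y) = 0 := by ring
      rw [this, max_eq_left (by nlinarith : 1 - c * (y - a) ≤ 0),
        min_eq_right (by nlinarith)]
    · rw [max_eq_right h2]
      rw [min_eq_right (by nlinarith), max_eq_right (by nlinarith)]
      linear_combination hce

private lemma sum_le_one_of_pairwise {ι : Type*} (T : Finset ι) (u : ι → ℝ)
    (h0 : ∀ a ∈ T, 0 ≤ u a) (h1 : ∀ a ∈ T, u a ≤ 1)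
    (hp : ∀ a ∈ T, ∀ b ∈ T, a ≠ b → u a = 0 ∨ u b = 0) :
    ∑ a ∈ T, u a ≤ 1 := by
  by_cases hz : ∀ a ∈ T, u a = 0
  · rw [Finset.sum_eq_zero hz]; norm_num
  · push_neg at hz
    obtain ⟨a₀, ha₀T, ha₀⟩ := hz
    rw [Finset.sum_eq_single a₀
      (fun b hb hne => ((hp a₀ ha₀T b hb (Ne.symm hne)).resolve_left ha₀))
      (fun h => absurd ha₀T h)]
    exact h1 a₀ ha₀T

/-- The tent function approximating the indicator of `{x | g x = α}`. -/
private def Hfun {X : Type*} (g : X → ℝ) (α : ℝ) (n : ℕ) : X → ℝ :=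
  fun x => max 0 (1 - ((n : ℝ) + 1) * |g x - α|)

private lemma aux_countable {X : Type*} (𝒜 : Set (X → ℝ))
    (h1 : (fun _ => (1 : ℝ)) ∈ 𝒜)
    (hadd : ∀ f ∈ 𝒜, ∀ g ∈ 𝒜, f + g ∈ 𝒜)
    (hsmul : ∀ (c : ℝ), ∀ f ∈ 𝒜, c • f ∈ 𝒜)
    (hmax : ∀ f ∈ 𝒜, ∀ g ∈ 𝒜, f ⊔ g ∈ 𝒜)
    (I : (X → ℝ) → ℝ)
    (hIadd : ∀ f ∈ 𝒜, ∀ g ∈ 𝒜, I (f + g) = I f + I g)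
    (hIsmul : ∀ (c : ℝ), ∀ f ∈ 𝒜, I (c • f) = c * I f)
    (hIpos : ∀ f ∈ 𝒜, (∀ x, 0 ≤ f x) → 0 ≤ I f)
    (g : X → ℝ) (hg : g ∈ 𝒜) :
    ∃ C : Set ℝ, C.Countable ∧ ∀ α ∉ C,
      Tendsto (fun n : ℕ => I (Hfun g α n)) atTop (nhds 0) := by
  -- basic closure facts
  have hconst : ∀ c : ℝ, (fun _ : X => c) ∈ 𝒜 := by
    intro c
    have h := hsmul c _ h1
    have he : (c • fun _ : X => (1 : ℝ)) = fun _ : X => c := by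
      funext x; simp
    rwa [he] at h
  have hsub : ∀ u ∈ 𝒜, ∀ v ∈ 𝒜, u - v ∈ 𝒜 := by
    intro u hu v hv
    have h := hadd u hu _ (hsmul (-1) v hv)
    have he : u + (-1 : ℝ) • v = u - v := by
      funext x; simp; ring
    rwa [he] at h
  have hzero : (0 : X → ℝ) ∈ 𝒜 := by
    have h := hsmul 0 _ h1
    rwa [zero_smul] at h
  have hIzero : I 0 = 0 := by
    have h := hIsmul 0 _ h1
    rwa [zero_smul, zero_mul] at h
  have hImono : ∀ u ∈ 𝒜, ∀ v ∈ 𝒜, (∀ x, u x ≤ v x) → I u ≤ I v := by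
    intro u hu v hv huv
    have h₁ : v - u ∈ 𝒜 := hsub v hv u hu
    have h₂ : 0 ≤ I (v - u) := hIpos _ h₁ (fun x => by
      simp [Pi.sub_apply]; exact huv x)
    have h₃ : I (v - u + u) = I (v - u) + I u := hIadd _ h₁ _ hu
    rw [sub_add_cancel] at h₃
    linarith
  -- membership of tent functions
  have hmemH : ∀ (α : ℝ) (n : ℕ), Hfun g α n ∈ 𝒜 := by
    intro α n
    have hd : (g - fun _ => α) ∈ 𝒜 := hsub g hg _ (hconst α)
    have habs : ((g - fun _ => α) ⊔ ((-1 : ℝ) • (g - fun _ => α))) ∈ 𝒜 :=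
      hmax _ hd _ (hsmul _ _ hd)
    have hq : ((fun _ => (1 : ℝ)) -
        ((n : ℝ) + 1) • ((g - fun _ => α) ⊔ ((-1 : ℝ) • (g - fun _ => α)))) ∈ 𝒜 :=
      hsub _ h1 _ (hsmul _ _ habs)
    have he : Hfun g α n = ((fun _ => (0 : ℝ)) ⊔ ((fun _ => (1 : ℝ)) -
        ((n : ℝ) + 1) • ((g - fun _ => α) ⊔ ((-1 : ℝ) • (g - fun _ => α))))) := by
      funext x
      simp only [Hfun, Pi.sup_apply, Pi.sub_apply, Pi.smul_apply, smul_eq_mul]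
      rw [abs_eq_max_neg]
      congr 2
      · ring_nf
    rw [he]
    exact hmax _ (hconst 0) _ hq
  have hH0 : ∀ (α : ℝ) (n : ℕ) (x : X), 0 ≤ Hfun g α n x := fun α n x => le_max_left _ _
  have hH1 : ∀ (α : ℝ) (n : ℕ) (x : X), Hfun g α n x ≤ 1 := by
    intro α n x
    apply max_le (by norm_num)
    have : 0 ≤ ((n : ℝ) + 1) * |g x - α| := by positivity
    linarith
  -- the sequence of integrals
  set a : ℝ → ℕ → ℝ := fun α n => I (Hfun g α n) with ha_def
  have haanti : ∀ α, Antitone (a α) := by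
    intro α
    apply antitone_nat_of_succ_le
    intro n
    apply hImono _ (hmemH α (n + 1)) _ (hmemH α n)
    intro x
    apply max_le_max le_rfl
    have h₁ : ((n : ℝ) + 1) * |g x - α| ≤ ((n : ℝ) + 1 + 1) * |g x - α| := by
      apply mul_le_mul_of_nonneg_right _ (abs_nonneg _)
      linarith
    push_cast
    linarith
  have ha0 : ∀ α n, 0 ≤ a α n := fun α n => hIpos _ (hmemH α n) (hH0 α n)
  have hbdd : ∀ α, BddBelow (Set.range (a α)) := by
    intro α
    exact ⟨0, fun y hy => by obtain ⟨n, rfl⟩ := hy; exact ha0 α n⟩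
  set c : ℝ → ℝ := fun α => ⨅ n, a α n with hc_def
  have hc0 : ∀ α, 0 ≤ c α := fun α => le_ciInf (ha0 α)
  have hcle : ∀ α n, c α ≤ a α n := fun α n => ciInf_le (hbdd α) n
  -- support estimate
  have hsupp : ∀ (α : ℝ) (n : ℕ) (x : X), Hfun g α n x ≠ 0 →
      |g x - α| < 1 / ((n : ℝ) + 1) := by
    intro α n x hx
    have hn1 : (0 : ℝ) < (n : ℝ) + 1 := by positivity
    have hq : 0 < 1 - ((n : ℝ) + 1) * |g x - α| := by
      by_contra hcon
      push_neg at hcon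
      exact hx (max_eq_left hcon)
    rw [lt_div_iff₀ hn1]
    nlinarith
  -- finite sums of tents are in 𝒜 and I is additive on them
  have hsumA : ∀ (T : Finset ℝ) (F : ℝ → X → ℝ), (∀ b ∈ T, F b ∈ 𝒜) →
      (∑ b ∈ T, F b) ∈ 𝒜 ∧ I (∑ b ∈ T, F b) = ∑ b ∈ T, I (F b) := by
    intro T
    induction T using Finset.cons_induction with
    | empty => intro F _; simpa using ⟨hzero, hIzero⟩
    | cons b T hb ih =>
      intro F hF
      have h₁ := ih F (fun b' hb' => hF b' (Finset.mem_cons_of_mem hb'))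
      have hbF : F b ∈ 𝒜 := hF b (Finset.mem_cons_self b T)
      rw [Finset.sum_cons, Finset.sum_cons]
      exact ⟨hadd _ hbF _ h₁.1, by rw [hIadd _ hbF _ h₁.1, h₁.2]⟩
  -- key estimate : sums of limits bounded by I(1)
  have key : ∀ T : Finset ℝ, ∑ α ∈ T, c α ≤ I (fun _ => 1) := by
    intro T
    -- find a positive lower bound on the gaps
    obtain ⟨δ, hδ0, hδ⟩ : ∃ δ : ℝ, 0 < δ ∧
        ∀ α ∈ T, ∀ β ∈ T, α ≠ β → δ ≤ |α - β| := by
      by_cases hOD : T.offDiag.Nonempty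
      · refine ⟨T.offDiag.inf' hOD (fun p => |p.1 - p.2|), ?_, ?_⟩
        · rw [Finset.lt_inf'_iff]
          intro p hp
          rw [Finset.mem_offDiag] at hp
          exact abs_pos.mpr (sub_ne_zero_of_ne hp.2.2)
        · intro α hα β hβ hne
          exact Finset.inf'_le (f := fun p : ℝ × ℝ => |p.1 - p.2|) (b := (α, β))
            (Finset.mem_offDiag.mpr ⟨hα, hβ, hne⟩)
      · refine ⟨1, one_pos, ?_⟩
        intro α hα β hβ hne
        exact absurd ⟨(α, β), Finset.mem_offDiag.mpr ⟨hα, hβ, hne⟩⟩ hOD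
    obtain ⟨n, hn⟩ := exists_nat_one_div_lt (half_pos hδ0)
    have hptws : ∀ x, ∑ α ∈ T, Hfun g α n x ≤ 1 := by
      intro x
      apply sum_le_one_of_pairwise T _ (fun α _ => hH0 α n x) (fun α _ => hH1 α n x)
      intro α hα β hβ hne
      by_contra hcon
      push_neg at hcon
      have h₁ := hsupp α n x hcon.1
      have h₂ := hsupp β n x hcon.2
      have h₃ : |α - β| ≤ |α - g x| + |g x - β| := abs_sub_le α (g x) β
      rw [abs_sub_comm α (g x)] at h₃
      have h₄ := hδ α hα β hβ hne
      linarith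
    have hS := hsumA T (fun α => Hfun g α n) (fun α _ => hmemH α n)
    calc ∑ α ∈ T, c α ≤ ∑ α ∈ T, a α n := Finset.sum_le_sum (fun α _ => hcle α n)
      _ = I (∑ α ∈ T, Hfun g α n) := hS.2.symm
      _ ≤ I (fun _ => 1) := by
          apply hImono _ hS.1 _ h1
          intro x
          rw [Finset.sum_apply]
          exact hptws x
  -- level sets are finite
  have hI1nn : 0 ≤ I (fun _ => 1) := hIpos _ h1 (fun x => by norm_num)
  have hlev : ∀ m : ℕ, {α : ℝ | 1 / ((m : ℝ) + 1) ≤ c α}.Finite := by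
    intro m
    by_contra hinf
    obtain ⟨T, hTsub, hTcard⟩ := Set.Infinite.exists_subset_card_eq hinf
      (⌈I (fun _ => 1) * ((m : ℝ) + 1)⌉₊ + 1)
    have h₁ : ∑ α ∈ T, c α ≤ I (fun _ => 1) := key T
    have h₂ : (T.card : ℝ) * (1 / ((m : ℝ) + 1)) ≤ ∑ α ∈ T, c α := by
      have := Finset.card_nsmul_le_sum T c (1 / ((m : ℝ) + 1))
        (fun α hα => hTsub hα)
      rwa [nsmul_eq_mul] at this
    have hm1 : (0 : ℝ) < (m : ℝ) + 1 := by positivity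
    have hN : I (fun _ => 1) * ((m : ℝ) + 1) < (T.card : ℝ) := by
      rw [hTcard]
      push_cast
      have := Nat.le_ceil (I (fun _ => 1) * ((m : ℝ) + 1))
      linarith
    have h₃ : I (fun _ => 1) < (T.card : ℝ) * (1 / ((m : ℝ) + 1)) := by
      rw [mul_one_div, lt_div_iff₀ hm1]
      linarith
    linarith
  -- the bad set is countable
  refine ⟨{α : ℝ | 0 < c α}, ?_, ?_⟩
  · refine Set.Countable.mono ?_ (Set.countable_iUnion (fun m => (hlev m).countable))
    intro α hα
    simp only [Set.mem_setOf_eq] at hα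
    obtain ⟨m, hm⟩ := exists_nat_one_div_lt hα
    exact Set.mem_iUnion.mpr ⟨m, hm.le⟩
  · intro α hα
    have hceq : c α = 0 := le_antisymm (not_lt.mp hα) (hc0 α)
    have h := tendsto_atTop_ciInf (haanti α) (hbdd α)
    rw [show (⨅ n, a α n) = c α from rfl, hceq] at h
    exact h

theorem stmt_6 {X : Type*} (𝒜 : Set (X → ℝ))
    (h1 : (fun _ => (1 : ℝ)) ∈ 𝒜)
    (hadd : ∀ f ∈ 𝒜, ∀ g ∈ 𝒜, f + g ∈ 𝒜)
    (hsmul : ∀ (c : ℝ), ∀ f ∈ 𝒜, c • f ∈ 𝒜)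
    (hmax : ∀ f ∈ 𝒜, ∀ g ∈ 𝒜, f ⊔ g ∈ 𝒜)
    (hmin : ∀ f ∈ 𝒜, ∀ g ∈ 𝒜, f ⊓ g ∈ 𝒜)
    (I : (X → ℝ) → ℝ)
    (hIadd : ∀ f ∈ 𝒜, ∀ g ∈ 𝒜, I (f + g) = I f + I g)
    (hIsmul : ∀ (c : ℝ), ∀ f ∈ 𝒜, I (c • f) = c * I f)
    (hIpos : ∀ f ∈ 𝒜, (∀ x, 0 ≤ f x) → 0 ≤ I f)
    (hI1 : I (fun _ => (1 : ℝ)) ≠ 0)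
    (t : ℕ) (f : Fin t → X → ℝ) (hf : ∀ i, f i ∈ 𝒜) (r s : ℝ) (hrs : r < s) :
    ∃ α ∈ Set.Ioo r s, ∀ i : Fin t,
      Tendsto (fun n : ℕ => I (fun x =>
        min (((n : ℝ) + 1) * (min (f i x) α - min (f i x) (α - 1 / ((n : ℝ) + 1))))
            (((n : ℝ) + 1) * (max (f i x) (α + 1 / ((n : ℝ) + 1)) - max (f i x) α))))
        atTop (nhds 0) := by
  choose C hCcount hCtend using fun i : Fin t =>
    aux_countable 𝒜 h1 hadd hsmul hmax I hIadd hIsmul hIpos (f i) (hf i)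
  have hUcount : (⋃ i : Fin t, C i).Countable := Set.countable_iUnion hCcount
  have hnotsub : ¬ (Set.Ioo r s ⊆ ⋃ i : Fin t, C i) := by
    intro hsub
    have h₁ : (Set.Ioo r s).Countable := hUcount.mono hsub
    have h₂ : Cardinal.mk ↑(Set.Ioo r s) ≤ Cardinal.aleph0 :=
      Cardinal.mk_le_aleph0_iff.mpr (Set.countable_coe_iff.mpr h₁)
    rw [Cardinal.mk_Ioo_real hrs] at h₂
    exact absurd h₂ (not_le.mpr Cardinal.aleph0_lt_continuum)
  obtain ⟨α, hαIoo, hαnot⟩ := Set.not_subset.mp hnotsub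
  refine ⟨α, hαIoo, fun i => ?_⟩
  have hαC : α ∉ C i := fun h => hαnot (Set.mem_iUnion.mpr ⟨i, h⟩)
  have heq : (fun n : ℕ => I (fun x =>
      min (((n : ℝ) + 1) * (min (f i x) α - min (f i x) (α - 1 / ((n : ℝ) + 1))))
          (((n : ℝ) + 1) * (max (f i x) (α + 1 / ((n : ℝ) + 1)) - max (f i x) α))))
      = fun n : ℕ => I (Hfun (f i) α n) := by
    funext n
    congr 1
    funext x
    have hn1 : (0 : ℝ) < (n : ℝ) + 1 := by positivity
    have hce : ((n : ℝ) + 1) * (1 / ((n : ℝ) + 1)) = 1 := by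
      field_simp
    exact (tent_eq (f i x) α ((n : ℝ) + 1) (1 / ((n : ℝ) + 1))
      (by positivity) hce).trans rfl
  rw [heq]
  exact hCtend i α hαC
end

section
/- Let (M, ℬ, μ) be a probability space in which every singleton is measurable. Then there is a unique measure μ⁽²⁾ on the σ-algebra ℬ⁽²⁾ of subsets of M² generated by measurable rectangles and the diagonal D = {(x,x) : x ∈ M}, which extends the product measure μ² and satisfies μ⁽²⁾(D) = Σ_{x ∈ M} μ({x})². Moreover, for every X ∈ ℬ⁽²⁾ there is a μ²-measurable set U with μ⁽²⁾(X Δ U) = 0. -/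
open MeasureTheory Set

/-- The σ-algebra on `M × M` generated by measurable rectangles and the diagonal. -/
def pairDiagAlgebra (M : Type*) [MeasurableSpace M] : MeasurableSpace (M × M) :=
  MeasurableSpace.generateFrom
    ({S | ∃ A B : Set M, MeasurableSet A ∧ MeasurableSet B ∧ S = A ×ˢ B} ∪
      {Set.diagonal M})

lemma prod_le_pairDiag {M : Type*} [MeasurableSpace M] :
    (Prod.instMeasurableSpace : MeasurableSpace (M × M)) ≤ pairDiagAlgebra M := by
  rw [← generateFrom_prod]
  refine MeasurableSpace.generateFrom_le fun t ht => MeasurableSpace.measurableSet_generateFrom ?_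
  obtain ⟨A, hA, B, hB, rfl⟩ := ht
  exact Or.inl ⟨A, B, hA, hB, rfl⟩

lemma diag_mem_pairDiag {M : Type*} [MeasurableSpace M] :
    MeasurableSet[pairDiagAlgebra M] (Set.diagonal M) :=
  MeasurableSpace.measurableSet_generateFrom (Or.inr rfl)

theorem stmt_10 {M : Type*} [MeasurableSpace M] (μ : Measure M)
    [IsProbabilityMeasure μ] (hsing : ∀ x : M, MeasurableSet ({x} : Set M)) :
    (∃! ν : @Measure (M × M) (pairDiagAlgebra M),
      (∀ S : Set (M × M), MeasurableSet S → ν S = (μ.prod μ) S) ∧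
      ν (Set.diagonal M) = ∑' x : M, μ {x} ^ 2) ∧
    (∀ ν : @Measure (M × M) (pairDiagAlgebra M),
      ((∀ S : Set (M × M), MeasurableSet S → ν S = (μ.prod μ) S) ∧
        ν (Set.diagonal M) = ∑' x : M, μ {x} ^ 2) →
      ∀ X : Set (M × M), MeasurableSet[pairDiagAlgebra M] X →
        ∃ U : Set (M × M), MeasurableSet U ∧ ν (symmDiff X U) = 0) := by
  classical
  haveI : MeasurableSingletonClass M := ⟨hsing⟩
  -- atoms
  set A : Set M := {x : M | μ {x} ≠ 0} with hAdef
  have hAc : A.Countable := by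
    have h := Measure.countable_meas_pos_of_disjoint_iUnion (μ := μ)
      (As := fun x : M => ({x} : Set M)) (fun x => hsing x)
      (fun x y hxy => by simpa [Function.onFun] using disjoint_singleton.mpr hxy)
    refine h.mono ?_
    intro x hx
    simpa [hAdef, pos_iff_ne_zero] using hx
  -- diagonal of atoms
  set DA : Set (M × M) := ⋃ x ∈ A, {(x, x)} with hDAdef
  have hDAm : MeasurableSet DA :=
    MeasurableSet.biUnion hAc fun x _ => measurableSet_singleton _
  have hDAd : DA ⊆ Set.diagonal M := by
    intro p hp
    simp only [hDAdef, mem_iUnion, mem_singleton_iff] at hp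
    obtain ⟨x, _, rfl⟩ := hp
    exact rfl
  have hDAm' : MeasurableSet[pairDiagAlgebra M] DA := prod_le_pairDiag _ hDAm
  -- value of the product measure on DA
  have hDAval : μ.prod μ DA = ∑' x : M, μ {x} ^ 2 := by
    rw [hDAdef, measure_biUnion hAc ?hd fun x _ => measurableSet_singleton _]
    · have h1 : ∀ x : M, μ.prod μ {(x, x)} = μ {x} ^ 2 := by
        intro x
        rw [← Set.singleton_prod_singleton, Measure.prod_prod, sq]
      calc ∑' x : A, μ.prod μ {((x : M), (x : M))} = ∑' x : A, μ {(x : M)} ^ 2 := by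
            exact tsum_congr fun x => h1 x
        _ = ∑' x : M, μ {x} ^ 2 := by
            refine tsum_subtype_eq_of_support_subset (f := fun x : M => μ {x} ^ 2) ?_
            intro x hx
            simp only [Function.mem_support, ne_eq] at hx
            simp only [hAdef, mem_setOf_eq]
            intro h0
            exact hx (by rw [h0]; simp)
    case hd =>
      intro x hx y hy hxy
      simp only [Function.onFun, disjoint_singleton]
      exact fun h => hxy (congrArg Prod.fst h)
  -- measurable subsets of the non-atomic diagonal are null
  have hnull : ∀ T : Set (M × M), MeasurableSet T → T ⊆ Set.diagonal M \ DA →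
      μ.prod μ T = 0 := by
    intro T hT hsub
    have hsec : ∀ x : M, μ (Prod.mk x ⁻¹' T) = 0 := by
      intro x
      by_cases hx : μ {x} = 0
      · refine measure_mono_null ?_ hx
        intro y hy
        have h := hsub hy
        have : x = y := h.1
        simp [← this]
      · have he : Prod.mk x ⁻¹' T = ∅ := by
          ext y
          simp only [mem_preimage, mem_empty_iff_false, iff_false]
          intro hy
          have h := hsub hy
          have hxy : x = y := h.1
          apply h.2
          subst hxy
          exact mem_biUnion (by simpa [hAdef] using hx) rfl
        simp [he]
    rw [Measure.prod_apply hT]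
    simp only [hsec]
    exact lintegral_zero
  have hsymmnull : ∀ T T' : Set (M × M), MeasurableSet T → MeasurableSet T' →
      symmDiff T T' ⊆ Set.diagonal M \ DA → μ.prod μ T = μ.prod μ T' := by
    intro T T' hT hT' hsub
    exact measure_congr (measure_symmDiff_eq_zero_iff.mp (hnull _ (hT.symmDiff hT') hsub))
  -- symmDiff of unions
  have hsymmUnion : ∀ (f g : ℕ → Set (M × M)),
      symmDiff (⋃ i, f i) (⋃ i, g i) ⊆ ⋃ i, symmDiff (f i) (g i) := by
    intro f g p hp
    rw [Set.mem_symmDiff] at hp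
    rcases hp with ⟨hp1, hp2⟩ | ⟨hp1, hp2⟩
    · simp only [mem_iUnion] at hp1 hp2 ⊢
      obtain ⟨i, hi⟩ := hp1
      exact ⟨i, Set.mem_symmDiff.mpr (Or.inl ⟨hi, fun h => hp2 ⟨i, h⟩⟩)⟩
    · simp only [mem_iUnion] at hp1 hp2 ⊢
      obtain ⟨i, hi⟩ := hp1
      exact ⟨i, Set.mem_symmDiff.mpr (Or.inr ⟨hi, fun h => hp2 ⟨i, h⟩⟩)⟩
  -- every pairDiag-measurable set has a product-measurable witness
  set Good : Set (M × M) → Prop :=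
    fun X => ∃ T, MeasurableSet T ∧ symmDiff X T ⊆ Set.diagonal M \ DA with hGdef
  have hGood : ∀ X, MeasurableSet[pairDiagAlgebra M] X → Good X := by
    have hle : pairDiagAlgebra M ≤
        { MeasurableSet' := Good
          measurableSet_empty := ⟨∅, MeasurableSet.empty, by simp⟩
          measurableSet_compl := by
            rintro X ⟨T, hT, hsub⟩
            exact ⟨Tᶜ, hT.compl, by rwa [compl_symmDiff_compl]⟩
          measurableSet_iUnion := by
            intro f hf
            choose T hTm hTsub using hf
            refine ⟨⋃ i, T i, MeasurableSet.iUnion hTm, ?_⟩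
            exact subset_trans (hsymmUnion f T) (iUnion_subset hTsub) } := by
      refine MeasurableSpace.generateFrom_le ?_
      rintro t (⟨B, C, hB, hC, rfl⟩ | ht)
      · exact ⟨B ×ˢ C, hB.prod hC, by simp [symmDiff_self]⟩
      · rw [mem_singleton_iff] at ht
        subst ht
        exact ⟨DA, hDAm, by rw [symmDiff_of_ge hDAd]⟩
    exact fun X hX => hle _ hX
  -- the measure
  set F : Set (M × M) → ENNReal := fun X => if h : Good X then μ.prod μ h.choose else 0 with hFdef
  have hFeq : ∀ X T, MeasurableSet T → symmDiff X T ⊆ Set.diagonal M \ DA →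
      F X = μ.prod μ T := by
    intro X T hT hsub
    have hg : Good X := ⟨T, hT, hsub⟩
    obtain ⟨hTm', hsub'⟩ := hg.choose_spec
    rw [hFdef]
    simp only [dif_pos hg]
    apply hsymmnull _ _ hTm' hT
    refine subset_trans (symmDiff_triangle _ X _) (union_subset ?_ hsub)
    rw [symmDiff_comm]
    exact hsub'
  set ν : @Measure (M × M) (pairDiagAlgebra M) :=
    @Measure.ofMeasurable (M × M) (pairDiagAlgebra M) (fun X _ => F X)
      (by show F ∅ = 0; rw [hFeq ∅ ∅ MeasurableSet.empty (by simp)]; exact measure_empty)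
      (by
        intro f hfm hfd
        show F (⋃ i, f i) = ∑' i, F (f i)
        choose T hTm hTsub using fun i => hGood (f i) (hfm i)
        rw [hFeq (⋃ i, f i) (⋃ i, T i) (MeasurableSet.iUnion hTm)
          (subset_trans (hsymmUnion f T) (iUnion_subset hTsub))]
        have : ∀ i, F (f i) = μ.prod μ (T i) := fun i => hFeq _ _ (hTm i) (hTsub i)
        simp only [this]
        refine measure_iUnion₀ ?_ fun i => (hTm i).nullMeasurableSet
        intro i j hij
        refine measure_mono_null (fun p hp => ?_) (hnull ((T i) ∩ (T j))
          ((hTm i).inter (hTm j)) (fun p hp => ?_))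
        · exact hp
        · by_cases hpf : p ∈ f i
          · have hpj : p ∉ f j := fun h => (Set.disjoint_left.mp (hfd hij) hpf) h
            exact hTsub j (Set.mem_symmDiff.mpr (Or.inr ⟨hp.2, hpj⟩))
          · exact hTsub i (Set.mem_symmDiff.mpr (Or.inr ⟨hp.1, hpf⟩))) with hνdef
  have νapp : ∀ X, MeasurableSet[pairDiagAlgebra M] X → ν X = F X := by
    intro X hX
    exact @Measure.ofMeasurable_apply (M × M) (pairDiagAlgebra M) _ _ _ X hX
  have prop1 : ∀ S : Set (M × M), MeasurableSet S → ν S = μ.prod μ S := by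
    intro S hS
    rw [νapp S (prod_le_pairDiag _ hS), hFeq S S hS (by simp [symmDiff_self])]
  have prop2 : ν (Set.diagonal M) = ∑' x : M, μ {x} ^ 2 := by
    rw [νapp _ diag_mem_pairDiag, hFeq _ DA hDAm (by rw [symmDiff_of_ge hDAd]), hDAval]
  -- any measure with the two properties kills diagonal \ DA
  have hDiffZero : ∀ ν' : @Measure (M × M) (pairDiagAlgebra M),
      ((∀ S : Set (M × M), MeasurableSet S → ν' S = (μ.prod μ) S) ∧
        ν' (Set.diagonal M) = ∑' x : M, μ {x} ^ 2) →
      ν' (Set.diagonal M \ DA) = 0 := by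
    rintro ν' ⟨h1, h2⟩
    have hsplit : ν' (Set.diagonal M ∩ DA) + ν' (Set.diagonal M \ DA) = ν' (Set.diagonal M) :=
      measure_inter_add_diff _ hDAm'
    rw [Set.inter_eq_self_of_subset_right hDAd, h2, h1 DA hDAm, hDAval] at hsplit
    have hfin : (∑' x : M, μ {x} ^ 2) ≠ ⊤ := by
      rw [← hDAval]
      exact measure_ne_top _ _
    have := hsplit
    nth_rewrite 2 [← add_zero (∑' x : M, μ {x} ^ 2)] at this
    exact (ENNReal.add_right_inj hfin).mp this
  have hKey : ∀ ν' : @Measure (M × M) (pairDiagAlgebra M),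
      ((∀ S : Set (M × M), MeasurableSet S → ν' S = (μ.prod μ) S) ∧
        ν' (Set.diagonal M) = ∑' x : M, μ {x} ^ 2) →
      ∀ X, MeasurableSet[pairDiagAlgebra M] X →
      ∀ T, MeasurableSet T → symmDiff X T ⊆ Set.diagonal M \ DA → ν' X = μ.prod μ T := by
    intro ν' hν' X hX T hT hsub
    have h0 : ν' (symmDiff X T) = 0 := measure_mono_null hsub (hDiffZero ν' hν')
    calc ν' X = ν' T := measure_congr (measure_symmDiff_eq_zero_iff.mp h0)
      _ = μ.prod μ T := hν'.1 T hT
  refine ⟨⟨ν, ⟨prop1, prop2⟩, ?_⟩, ?_⟩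
  · intro ν' hν'
    refine @Measure.ext (M × M) (pairDiagAlgebra M) _ _ fun X hX => ?_
    obtain ⟨T, hT, hsub⟩ := hGood X hX
    rw [hKey ν' hν' X hX T hT hsub, ← hKey ν ⟨prop1, prop2⟩ X hX T hT hsub]
  · intro ν' hν' X hX
    obtain ⟨T, hT, hsub⟩ := hGood X hX
    exact ⟨T, hT, measure_mono_null hsub (hDiffZero ν' hν')⟩
end

section
/- Let 𝒜 be a vector lattice of real functions on a set X containing the constant function 1, let ℰ be the smallest σ-algebra on X making every function in 𝒜 measurable, and let I be a Daniell integral on 𝒜 (a positive linear functional such that I(f_n) ↓ 0 whenever f_n ↓ 0 pointwise). Then there exists a measure ρ on ℰ such that I(f) = ∫ f dρ for every f ∈ 𝒜. -/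
open Filter Set Function MeasureTheory ENNReal

namespace DaniellStone

variable {X : Type*}

structure Hyp (𝒜 : Set (X → ℝ)) (I : (X → ℝ) → ℝ) : Prop where
  one : (fun _ => (1 : ℝ)) ∈ 𝒜
  add : ∀ f ∈ 𝒜, ∀ g ∈ 𝒜, f + g ∈ 𝒜
  smul : ∀ (c : ℝ), ∀ f ∈ 𝒜, c • f ∈ 𝒜
  max' : ∀ f ∈ 𝒜, ∀ g ∈ 𝒜, f ⊔ g ∈ 𝒜
  min' : ∀ f ∈ 𝒜, ∀ g ∈ 𝒜, f ⊓ g ∈ 𝒜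
  Iadd : ∀ f ∈ 𝒜, ∀ g ∈ 𝒜, I (f + g) = I f + I g
  Ismul : ∀ (c : ℝ), ∀ f ∈ 𝒜, I (c • f) = c * I f
  Ipos : ∀ f ∈ 𝒜, (∀ x, 0 ≤ f x) → 0 ≤ I f
  Icont : ∀ f : ℕ → X → ℝ, (∀ n, f n ∈ 𝒜) → (∀ x, Antitone fun n => f n x) →
      (∀ x, Tendsto (fun n => f n x) atTop (nhds 0)) →
      Tendsto (fun n => I (f n)) atTop (nhds 0)

namespace Hyp

variable {𝒜 : Set (X → ℝ)} {I : (X → ℝ) → ℝ} (H : Hyp 𝒜 I)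
include H

lemma zero_mem : (0 : X → ℝ) ∈ 𝒜 := by
  have := H.smul 0 _ H.one
  simpa using this

lemma neg_mem {f} (hf : f ∈ 𝒜) : -f ∈ 𝒜 := by
  have := H.smul (-1) f hf
  simpa using this

lemma sub_mem {f g} (hf : f ∈ 𝒜) (hg : g ∈ 𝒜) : f - g ∈ 𝒜 := by
  have := H.add f hf (-g) (H.neg_mem hg)
  simpa [sub_eq_add_neg] using this

lemma const_mem (c : ℝ) : (fun _ => c) ∈ 𝒜 := by
  have := H.smul c _ H.one
  convert this using 1
  funext x; simp

lemma I_zero : I 0 = 0 := by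
  have := H.Ismul 0 _ H.one
  simpa using this

lemma I_neg {f} (hf : f ∈ 𝒜) : I (-f) = - I f := by
  have := H.Ismul (-1) f hf
  simpa using this

lemma I_sub {f g} (hf : f ∈ 𝒜) (hg : g ∈ 𝒜) : I (f - g) = I f - I g := by
  have h1 := H.Iadd f hf (-g) (H.neg_mem hg)
  rw [← sub_eq_add_neg] at h1
  rw [h1, H.I_neg hg, sub_eq_add_neg]

lemma I_mono {f g} (hf : f ∈ 𝒜) (hg : g ∈ 𝒜) (hle : ∀ x, f x ≤ g x) : I f ≤ I g := by
  have h0 : 0 ≤ I (g - f) := H.Ipos _ (H.sub_mem hg hf) (fun x => by simpa using hle x)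
  rw [H.I_sub hg hf] at h0; linarith

lemma partialSum_mem (g : ℕ → X → ℝ) (hg : ∀ n, g n ∈ 𝒜) (N : ℕ) :
    (fun x => ∑ n ∈ Finset.range N, g n x) ∈ 𝒜 := by
  induction N with
  | zero => simp only [Finset.range_zero, Finset.sum_empty]; exact H.zero_mem
  | succ N ih =>
      have := H.add _ ih _ (hg N)
      convert this using 1
      funext x
      simp [Finset.sum_range_succ]

lemma I_partialSum (g : ℕ → X → ℝ) (hg : ∀ n, g n ∈ 𝒜) (N : ℕ) :
    I (fun x => ∑ n ∈ Finset.range N, g n x) = ∑ n ∈ Finset.range N, I (g n) := by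
  induction N with
  | zero => simp only [Finset.range_zero, Finset.sum_empty]; exact H.I_zero
  | succ N ih =>
      have h1 : (fun x => ∑ n ∈ Finset.range (N+1), g n x)
          = (fun x => ∑ n ∈ Finset.range N, g n x) + g N := by
        funext x; simp [Finset.sum_range_succ]
      rw [h1, H.Iadd _ (H.partialSum_mem g hg N) _ (hg N), ih, Finset.sum_range_succ]

lemma I_nonneg_of_nonneg {f} (hf : f ∈ 𝒜) (hf0 : ∀ x, 0 ≤ f x) : 0 ≤ I f :=
  H.Ipos f hf hf0

lemma I_const (c : ℝ) : I (fun _ => c) = c * I (fun _ => (1:ℝ)) := by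
  have := H.Ismul c _ H.one
  convert this using 2
  funext x; simp

/-- The key consequence of Daniell continuity: if a nonnegative `f ∈ 𝒜` is covered by a
countable sum of nonnegative functions of `𝒜`, then `I f` is at most the sum of the `I`s. -/
lemma I_le_of_cover {f : X → ℝ} (hf : f ∈ 𝒜) (hf0 : ∀ x, 0 ≤ f x)
    (g : ℕ → X → ℝ) (hg : ∀ n, g n ∈ 𝒜) (hg0 : ∀ n x, 0 ≤ g n x)
    (hcov : ∀ x, ENNReal.ofReal (f x) ≤ ∑' n, ENNReal.ofReal (g n x)) :
    ENNReal.ofReal (I f) ≤ ∑' n, ENNReal.ofReal (I (g n)) := by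
  set T := ∑' n, ENNReal.ofReal (I (g n)) with hTdef
  by_cases hT : T = ∞
  · simp [hT]
  -- partial sums
  set s : ℕ → X → ℝ := fun N x => ∑ n ∈ Finset.range N, g n x with hsdef
  have hsmem : ∀ N, s N ∈ 𝒜 := H.partialSum_mem g hg
  have hsmono : ∀ x, Monotone fun N => s N x := by
    intro x N M hNM
    exact Finset.sum_le_sum_of_subset_of_nonneg (Finset.range_subset_range.2 hNM)
      (fun n _ _ => hg0 n x)
  have hs0 : ∀ N x, 0 ≤ s N x := fun N x => Finset.sum_nonneg fun n _ => hg0 n x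
  -- approximation step
  have hstep : ∀ x, ∀ ε : ℝ, 0 < ε → ∃ N, f x - ε ≤ s N x := by
    intro x ε hε
    rcases le_or_gt (f x) ε with h | h
    · exact ⟨0, by simpa [hsdef] using sub_nonpos.2 h⟩
    · have h0 : (0:ℝ) < f x := lt_trans hε h
      have h1 : ENNReal.ofReal (f x - ε) < ∑' n, ENNReal.ofReal (g n x) := by
        refine lt_of_lt_of_le ?_ (hcov x)
        exact ENNReal.ofReal_lt_ofReal_iff h0 |>.2 (by linarith)
      rw [ENNReal.tsum_eq_iSup_nat, lt_iSup_iff] at h1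
      obtain ⟨N, hN⟩ := h1
      refine ⟨N, ?_⟩
      rw [← ENNReal.ofReal_sum_of_nonneg (fun n _ => hg0 n x)] at hN
      have := (ENNReal.ofReal_le_ofReal_iff (hs0 N x)).1 hN.le
      simpa [hsdef] using this
  -- real-valued bound for every ε
  have hIone : 0 ≤ I (fun _ => (1:ℝ)) := H.Ipos _ H.one (fun _ => zero_le_one)
  have hmain : ∀ ε : ℝ, 0 < ε → I f ≤ T.toReal + ε * (I (fun _ => (1:ℝ)) + 1) := by
    intro ε hε
    set d : ℕ → X → ℝ := fun N => (f - (fun _ => ε) - s N) ⊔ 0 with hddef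
    have hdmem : ∀ N, d N ∈ 𝒜 :=
      fun N => H.max' _ (H.sub_mem (H.sub_mem hf (H.const_mem ε)) (hsmem N)) _ H.zero_mem
    have hdanti : ∀ x, Antitone fun N => d N x := by
      intro x N M hNM
      have := hsmono x hNM
      simp only [hddef, Pi.sup_apply, Pi.sub_apply, Pi.zero_apply]
      exact max_le_max (by linarith) le_rfl
    have hdto : ∀ x, Tendsto (fun N => d N x) atTop (nhds 0) := by
      intro x
      obtain ⟨N₀, hN₀⟩ := hstep x ε hε
      refine tendsto_const_nhds.congr' ?_
      filter_upwards [eventually_ge_atTop N₀] with N hN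
      have : f x - ε ≤ s N x := le_trans hN₀ (hsmono x hN)
      simp only [hddef, Pi.sup_apply, Pi.sub_apply, Pi.zero_apply]
      rw [max_eq_right (by linarith)]
    have hlim := H.Icont d hdmem hdanti hdto
    obtain ⟨N, hN⟩ := (hlim.eventually (eventually_le_nhds hε)).exists
    -- pointwise : f - ε ≤ d N + s N
    have hfle : ∀ x, f x - ε ≤ d N x + s N x := by
      intro x
      simp only [hddef, Pi.sup_apply, Pi.sub_apply, Pi.zero_apply]
      have : f x - ε - s N x ≤ max (f x - ε - s N x) 0 := le_max_left _ _
      linarith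
    have h2 : I (f - (fun _ => ε)) ≤ I (d N) + I (s N) := by
      rw [← H.Iadd _ (hdmem N) _ (hsmem N)]
      exact H.I_mono (H.sub_mem hf (H.const_mem ε)) (H.add _ (hdmem N) _ (hsmem N))
        (fun x => by simpa using hfle x)
    rw [H.I_sub hf (H.const_mem ε), H.I_const ε] at h2
    have h3 : I (s N) ≤ T.toReal := by
      have h4 : ENNReal.ofReal (I (s N)) ≤ T := by
        rw [H.I_partialSum g hg N,
          ENNReal.ofReal_sum_of_nonneg (fun n _ => H.Ipos _ (hg n) (hg0 n))]
        exact ENNReal.sum_le_tsum _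
      exact (ENNReal.ofReal_le_iff_le_toReal hT).1 h4
    nlinarith [hIone, hε]
  have hfinal : I f ≤ T.toReal := by
    refine le_of_forall_pos_le_add ?_
    intro ε hε
    have hd : 0 < I (fun _ => (1:ℝ)) + 1 := by linarith
    have := hmain (ε / (I (fun _ => (1:ℝ)) + 1)) (div_pos hε hd)
    rw [div_mul_cancel₀] at this
    · linarith
    · exact ne_of_gt hd
  calc ENNReal.ofReal (I f) ≤ ENNReal.ofReal T.toReal := ENNReal.ofReal_le_ofReal hfinal
    _ = T := ENNReal.ofReal_toReal hT

end Hyp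

/-- A countable cover of an `ℝ≥0∞`-valued function by nonnegative elements of `𝒜`. -/
def Cover (𝒜 : Set (X → ℝ)) (h : X → ℝ≥0∞) (g : ℕ → X → ℝ) : Prop :=
  (∀ n, g n ∈ 𝒜) ∧ (∀ n x, 0 ≤ g n x) ∧ ∀ x, h x ≤ ∑' n, ENNReal.ofReal (g n x)

/-- The upper integral associated to a Daniell integral. -/
noncomputable def Istar (𝒜 : Set (X → ℝ)) (I : (X → ℝ) → ℝ) (h : X → ℝ≥0∞) : ℝ≥0∞ :=
  ⨅ (g : ℕ → X → ℝ) (_ : Cover 𝒜 h g), ∑' n, ENNReal.ofReal (I (g n))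

variable {𝒜 : Set (X → ℝ)} {I : (X → ℝ) → ℝ}

lemma Istar_le_cover {h : X → ℝ≥0∞} {g : ℕ → X → ℝ} (hc : Cover 𝒜 h g) :
    Istar 𝒜 I h ≤ ∑' n, ENNReal.ofReal (I (g n)) :=
  iInf₂_le g hc

lemma le_Istar {a : ℝ≥0∞} {h : X → ℝ≥0∞}
    (H : ∀ g : ℕ → X → ℝ, Cover 𝒜 h g → a ≤ ∑' n, ENNReal.ofReal (I (g n))) :
    a ≤ Istar 𝒜 I h :=
  le_iInf₂ H

lemma exists_cover_lt {h : X → ℝ≥0∞} (hne : Istar 𝒜 I h ≠ ∞) {ε : ℝ≥0∞} (hε : ε ≠ 0) :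
    ∃ g : ℕ → X → ℝ, Cover 𝒜 h g ∧
      ∑' n, ENNReal.ofReal (I (g n)) ≤ Istar 𝒜 I h + ε := by
  have hlt : Istar 𝒜 I h < Istar 𝒜 I h + ε := ENNReal.lt_add_right hne hε
  conv_lhs at hlt => rw [Istar]
  rw [iInf_lt_iff] at hlt
  obtain ⟨g, hg⟩ := hlt
  rw [iInf_lt_iff] at hg
  obtain ⟨hc, hv⟩ := hg
  exact ⟨g, hc, hv.le⟩

lemma Istar_mono {h₁ h₂ : X → ℝ≥0∞} (hle : ∀ x, h₁ x ≤ h₂ x) :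
    Istar 𝒜 I h₁ ≤ Istar 𝒜 I h₂ :=
  le_Istar fun g hc => Istar_le_cover ⟨hc.1, hc.2.1, fun x => (hle x).trans (hc.2.2 x)⟩

variable (H : Hyp 𝒜 I)
include H

lemma Istar_zero : Istar 𝒜 I (fun _ => 0) = 0 := by
  refine le_antisymm ?_ zero_le
  have hc : Cover 𝒜 (fun _ => (0:ℝ≥0∞)) (fun _ => (0 : X → ℝ)) :=
    ⟨fun _ => H.zero_mem, fun _ _ => le_rfl, fun x => zero_le⟩
  have := Istar_le_cover (I := I) hc
  simpa [H.I_zero] using this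

lemma Istar_ofReal {f : X → ℝ} (hf : f ∈ 𝒜) (hf0 : ∀ x, 0 ≤ f x) :
    Istar 𝒜 I (fun x => ENNReal.ofReal (f x)) = ENNReal.ofReal (I f) := by
  refine le_antisymm ?_ (le_Istar fun g hc => H.I_le_of_cover hf hf0 g hc.1 hc.2.1 hc.2.2)
  set g : ℕ → X → ℝ := fun n => if n = 0 then f else 0 with hgdef
  have hc : Cover 𝒜 (fun x => ENNReal.ofReal (f x)) g := by
    refine ⟨fun n => ?_, fun n x => ?_, fun x => ?_⟩
    · by_cases hn : n = 0 <;> simp [hgdef, hn, hf, H.zero_mem]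
    · by_cases hn : n = 0 <;> simp [hgdef, hn, hf0 x]
    · have := ENNReal.le_tsum (f := fun n => ENNReal.ofReal (g n x)) 0
      simpa [hgdef] using this
  refine (Istar_le_cover (I := I) hc).trans ?_
  rw [tsum_eq_single 0]
  · simp [hgdef]
  · intro n hn; simp [hgdef, hn, H.I_zero]

omit H in
lemma Istar_tsum_le (h : ℕ → X → ℝ≥0∞) :
    Istar 𝒜 I (fun x => ∑' i, h i x) ≤ ∑' i, Istar 𝒜 I (h i) := by
  by_cases htop : ∑' i, Istar 𝒜 I (h i) = ∞
  · simp [htop]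
  have hne : ∀ i, Istar 𝒜 I (h i) ≠ ∞ :=
    fun i => ne_top_of_le_ne_top htop (ENNReal.le_tsum i)
  refine ENNReal.le_of_forall_pos_le_add fun ε hε _ => ?_
  obtain ⟨δ, hδpos, hδsum⟩ := ENNReal.exists_pos_sum_of_countable
    (ε := (ε : ℝ≥0∞)) (by exact_mod_cast hε.ne') ℕ
  choose g hgc hgv using fun i => exists_cover_lt (I := I) (hne i) (ε := δ i)
    (by exact_mod_cast (hδpos i).ne')
  set e : ℕ ≃ ℕ × ℕ := (Denumerable.eqv (ℕ × ℕ)).symm with hedef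
  set G : ℕ → X → ℝ := fun n => g (e n).1 (e n).2 with hGdef
  have hGc : Cover 𝒜 (fun x => ∑' i, h i x) G := by
    refine ⟨fun n => (hgc _).1 _, fun n x => (hgc _).2.1 _ x, fun x => ?_⟩
    have h1 : ∑' n, ENNReal.ofReal (G n x)
        = ∑' (p : ℕ × ℕ), ENNReal.ofReal (g p.1 p.2 x) := by
      simp only [hGdef]
      exact e.tsum_eq fun p => ENNReal.ofReal (g p.1 p.2 x)
    rw [h1, ENNReal.tsum_prod (f := fun i j => ENNReal.ofReal (g i j x))]
    exact ENNReal.tsum_le_tsum fun i => (hgc i).2.2 x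
  refine (Istar_le_cover (I := I) hGc).trans ?_
  have h2 : ∑' n, ENNReal.ofReal (I (G n))
      = ∑' (p : ℕ × ℕ), ENNReal.ofReal (I (g p.1 p.2)) := by
    simp only [hGdef]
    exact e.tsum_eq fun p => ENNReal.ofReal (I (g p.1 p.2))
  rw [h2, ENNReal.tsum_prod (f := fun i j => ENNReal.ofReal (I (g i j)))]
  calc ∑' i, ∑' j, ENNReal.ofReal (I (g i j))
      ≤ ∑' i, (Istar 𝒜 I (h i) + δ i) := ENNReal.tsum_le_tsum fun i => hgv i
    _ = ∑' i, Istar 𝒜 I (h i) + ∑' i, (δ i : ℝ≥0∞) := ENNReal.tsum_add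
    _ ≤ ∑' i, Istar 𝒜 I (h i) + ε := add_le_add le_rfl hδsum.le

lemma Istar_smul_le (r : ℝ) (hr : 0 < r) (h : X → ℝ≥0∞) :
    Istar 𝒜 I (fun x => ENNReal.ofReal r * h x) ≤ ENNReal.ofReal r * Istar 𝒜 I h := by
  by_cases htop : Istar 𝒜 I h = ∞
  · rw [htop, ENNReal.mul_top (by simp [hr])]
    exact le_top
  refine ENNReal.le_of_forall_pos_le_add fun ε hε _ => ?_
  set δ : ℝ := (ε : ℝ) / r with hδdef
  have hδpos : 0 < δ := div_pos (by exact_mod_cast hε) hr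
  obtain ⟨g, hgc, hgv⟩ := exists_cover_lt (I := I) htop
    (ε := ENNReal.ofReal δ) (by simp [hδpos])
  have hc : Cover 𝒜 (fun x => ENNReal.ofReal r * h x) (fun n => r • g n) := by
    refine ⟨fun n => H.smul r _ (hgc.1 n), fun n x => ?_, fun x => ?_⟩
    · have := hgc.2.1 n x
      simpa using mul_nonneg hr.le this
    · have h1 : ∀ n, ENNReal.ofReal ((r • g n) x) = ENNReal.ofReal r * ENNReal.ofReal (g n x) := by
        intro n
        simp only [Pi.smul_apply, smul_eq_mul]
        exact ENNReal.ofReal_mul hr.le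
      calc ENNReal.ofReal r * h x ≤ ENNReal.ofReal r * ∑' n, ENNReal.ofReal (g n x) := by
            gcongr; exact hgc.2.2 x
        _ = ∑' n, ENNReal.ofReal ((r • g n) x) := by
            simp only [h1]; rw [ENNReal.tsum_mul_left]
  refine (Istar_le_cover (I := I) hc).trans ?_
  have h3 : ∀ n, ENNReal.ofReal (I (r • g n)) = ENNReal.ofReal r * ENNReal.ofReal (I (g n)) := by
    intro n
    rw [H.Ismul r _ (hgc.1 n), ENNReal.ofReal_mul hr.le]
  calc ∑' n, ENNReal.ofReal (I (r • g n))
      = ENNReal.ofReal r * ∑' n, ENNReal.ofReal (I (g n)) := by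
        simp only [h3]; rw [ENNReal.tsum_mul_left]
    _ ≤ ENNReal.ofReal r * (Istar 𝒜 I h + ENNReal.ofReal δ) := by gcongr
    _ = ENNReal.ofReal r * Istar 𝒜 I h + ENNReal.ofReal r * ENNReal.ofReal δ := mul_add _ _ _
    _ ≤ ENNReal.ofReal r * Istar 𝒜 I h + ε := by
        gcongr
        rw [← ENNReal.ofReal_mul hr.le, hδdef, mul_div_cancel₀ _ hr.ne']
        simp

/-- Splitting of the upper integral of `g` along the set `{a < f}`. -/
lemma Istar_split {f : X → ℝ} (hf : f ∈ 𝒜) (a : ℝ) {g : X → ℝ} (hg : g ∈ 𝒜)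
    (hg0 : ∀ x, 0 ≤ g x) :
    Istar 𝒜 I (fun x => if a < f x then ENNReal.ofReal (g x) else 0)
      + Istar 𝒜 I (fun x => if a < f x then 0 else ENNReal.ofReal (g x))
      ≤ ENNReal.ofReal (I g) := by
  classical
  set ψ : ℕ → X → ℝ := fun k => g ⊓ ((k : ℝ) • ((f - fun _ => a) ⊔ 0)) with hψdef
  have hψapp : ∀ k x, ψ k x = min (g x) ((k:ℝ) * max (f x - a) 0) := fun k x => rfl
  have hψmem : ∀ k, ψ k ∈ 𝒜 := fun k =>
    H.min' _ hg _ (H.smul _ _ (H.max' _ (H.sub_mem hf (H.const_mem a)) _ H.zero_mem))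
  have hψ0 : ∀ k x, 0 ≤ ψ k x := by
    intro k x
    rw [hψapp]
    exact le_min (hg0 x) (mul_nonneg (Nat.cast_nonneg k) (le_max_right _ _))
  have hψle : ∀ k x, ψ k x ≤ g x := fun k x => min_le_left _ _
  have hψmono : ∀ x, Monotone fun k => ψ k x := by
    intro x k l hkl
    show ψ k x ≤ ψ l x
    rw [hψapp, hψapp]
    exact min_le_min le_rfl (mul_le_mul_of_nonneg_right (by exact_mod_cast hkl)
      (le_max_right _ _))
  have hψzero : ψ 0 = (0 : X → ℝ) := by
    funext x; rw [hψapp]; simp [min_eq_right (hg0 x)]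
  have hψnotin : ∀ x, ¬ a < f x → ∀ k, ψ k x = 0 := by
    intro x hx k
    rw [hψapp, max_eq_right (by linarith [not_lt.1 hx]), mul_zero,
      min_eq_right (hg0 x)]
  have hψin : ∀ x, a < f x → ∃ k, ψ k x = g x := by
    intro x hx
    obtain ⟨k, hk⟩ := exists_nat_ge (g x / (f x - a))
    refine ⟨k, ?_⟩
    rw [hψapp, max_eq_left (by linarith), min_eq_left ?_]
    calc g x = (g x / (f x - a)) * (f x - a) :=
          (div_mul_cancel₀ (g x) (ne_of_gt (by linarith))).symm
      _ ≤ (k:ℝ) * (f x - a) := mul_le_mul_of_nonneg_right hk (by linarith)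
  -- increments
  set d : ℕ → X → ℝ := fun k => ψ (k + 1) - ψ k with hddef
  have hdmem : ∀ k, d k ∈ 𝒜 := fun k => H.sub_mem (hψmem _) (hψmem _)
  have hd0 : ∀ k x, 0 ≤ d k x := by
    intro k x
    simp only [hddef, Pi.sub_apply, sub_nonneg]
    exact hψmono x (Nat.le_succ k)
  have hpartial : ∀ K x, ∑ k ∈ Finset.range K, ENNReal.ofReal (d k x)
      = ENNReal.ofReal (ψ K x) := by
    intro K x
    rw [← ENNReal.ofReal_sum_of_nonneg (fun k _ => hd0 k x)]
    congr 1
    calc ∑ k ∈ Finset.range K, d k x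
        = ∑ k ∈ Finset.range K, (ψ (k+1) x - ψ k x) := rfl
      _ = ψ K x - ψ 0 x := Finset.sum_range_sub (fun k => ψ k x) K
      _ = ψ K x := by rw [hψzero]; simp
  have hIψ0 : ∀ k, 0 ≤ I (ψ k) := fun k => H.Ipos _ (hψmem k) (hψ0 k)
  have hIpartial : ∀ K, ∑ k ∈ Finset.range K, ENNReal.ofReal (I (d k))
      = ENNReal.ofReal (I (ψ K)) := by
    intro K
    have hId : ∀ k, I (d k) = I (ψ (k+1)) - I (ψ k) := fun k =>
      H.I_sub (hψmem _) (hψmem _)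
    rw [← ENNReal.ofReal_sum_of_nonneg (fun k _ => by
      rw [hId k]; have := H.I_mono (hψmem k) (hψmem (k+1)) (fun x => hψmono x (Nat.le_succ k))
      linarith)]
    congr 1
    simp only [hId]
    have := Finset.sum_range_sub (f := fun k => I (ψ k)) K
    rw [this, hψzero, H.I_zero, sub_zero]
  -- Claim A
  have hA : Istar 𝒜 I (fun x => if a < f x then ENNReal.ofReal (g x) else 0)
      ≤ ⨆ K, ENNReal.ofReal (I (ψ K)) := by
    have hc : Cover 𝒜 (fun x => if a < f x then ENNReal.ofReal (g x) else 0) d := by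
      refine ⟨hdmem, hd0, fun x => ?_⟩
      rw [ENNReal.tsum_eq_iSup_nat]
      by_cases hx : a < f x
      · obtain ⟨k, hk⟩ := hψin x hx
        simp only [if_pos hx]
        refine le_iSup_of_le k ?_
        rw [hpartial, hk]
      · simp [hx]
    refine (Istar_le_cover (I := I) hc).trans ?_
    rw [ENNReal.tsum_eq_iSup_nat]
    exact iSup_le fun K => by
      rw [hIpartial]
      exact le_iSup (fun K => ENNReal.ofReal (I (ψ K))) K
  -- Claim B
  have hB : ∀ K, Istar 𝒜 I (fun x => if a < f x then 0 else ENNReal.ofReal (g x))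
      ≤ ENNReal.ofReal (I (g - ψ K)) := by
    intro K
    set gK : ℕ → X → ℝ := fun n => if n = 0 then g - ψ K else 0 with hgKdef
    have hsub0 : ∀ x, 0 ≤ (g - ψ K) x := fun x => by
      simp only [Pi.sub_apply, sub_nonneg]; exact hψle K x
    have hc : Cover 𝒜 (fun x => if a < f x then 0 else ENNReal.ofReal (g x)) gK := by
      refine ⟨fun n => ?_, fun n x => ?_, fun x => ?_⟩
      · by_cases hn : n = 0 <;>
          simp [hgKdef, hn, H.sub_mem hg (hψmem K), H.zero_mem]
      · by_cases hn : n = 0 <;> simp [hgKdef, hn, hsub0 x, hψle K x]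
      · by_cases hx : a < f x
        · simp [hx]
        · have h0 := ENNReal.le_tsum (f := fun n => ENNReal.ofReal (gK n x)) 0
          simp only [hgKdef, if_pos rfl] at h0
          refine le_trans ?_ h0
          simp only [if_neg hx, Pi.sub_apply, hψnotin x hx K, sub_zero, le_refl]
    refine (Istar_le_cover (I := I) hc).trans ?_
    rw [tsum_eq_single 0]
    · simp [hgKdef]
    · intro n hn; simp [hgKdef, hn, H.I_zero]
  calc Istar 𝒜 I (fun x => if a < f x then ENNReal.ofReal (g x) else 0)
      + Istar 𝒜 I (fun x => if a < f x then 0 else ENNReal.ofReal (g x))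
      ≤ (⨆ K, ENNReal.ofReal (I (ψ K)))
        + Istar 𝒜 I (fun x => if a < f x then 0 else ENNReal.ofReal (g x)) :=
        add_le_add hA le_rfl
    _ = ⨆ K, (ENNReal.ofReal (I (ψ K))
        + Istar 𝒜 I (fun x => if a < f x then 0 else ENNReal.ofReal (g x))) :=
        by rw [ENNReal.iSup_add]
    _ ≤ ⨆ K, (ENNReal.ofReal (I (ψ K)) + ENNReal.ofReal (I (g - ψ K))) := by
        exact iSup_mono fun K => add_le_add le_rfl (hB K)
    _ ≤ ENNReal.ofReal (I g) := by
        refine iSup_le fun K => ?_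
        rw [← ENNReal.ofReal_add (hIψ0 K) (by
          rw [H.I_sub hg (hψmem K)]
          have := H.I_mono (hψmem K) hg (hψle K)
          linarith)]
        rw [H.I_sub hg (hψmem K)]
        simp

/-- The outer measure associated to a Daniell integral. -/
noncomputable def mu : OuterMeasure X where
  measureOf E := Istar 𝒜 I (E.indicator 1)
  empty := by
    show Istar 𝒜 I ((∅ : Set X).indicator 1) = 0
    have h0 : (∅ : Set X).indicator (1 : X → ℝ≥0∞) = fun _ => 0 := by simp
    rw [h0]
    exact Istar_zero H
  mono := fun {E F} hEF =>
    Istar_mono fun x => Set.indicator_le_indicator_of_subset hEF (fun _ => zero_le) x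
  iUnion_nat := by
    intro s _
    have h1 : ∀ x, (⋃ i, s i).indicator (1 : X → ℝ≥0∞) x
        ≤ ∑' i, (s i).indicator (1 : X → ℝ≥0∞) x := by
      intro x
      by_cases hx : x ∈ ⋃ i, s i
      · obtain ⟨i, hi⟩ := mem_iUnion.1 hx
        calc (⋃ i, s i).indicator (1 : X → ℝ≥0∞) x = 1 := by simp [hx]
          _ = (s i).indicator (1 : X → ℝ≥0∞) x := by simp [hi]
          _ ≤ ∑' i, (s i).indicator (1 : X → ℝ≥0∞) x :=
            ENNReal.le_tsum i
      · simp [hx]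
    exact (Istar_mono h1).trans (Istar_tsum_le _)

lemma mu_apply (E : Set X) : mu H E = Istar 𝒜 I (E.indicator 1) := rfl

lemma isCaratheodory_lt {f : X → ℝ} (hf : f ∈ 𝒜) (a : ℝ) :
    (mu H).IsCaratheodory {x | a < f x} := by
  rw [OuterMeasure.isCaratheodory_iff_le']
  intro t
  simp only [mu_apply]
  refine le_Istar fun g hc => ?_
  set hA : ℕ → X → ℝ≥0∞ := fun n x => if a < f x then ENNReal.ofReal (g n x) else 0
    with hAdef
  set hAc : ℕ → X → ℝ≥0∞ := fun n x => if a < f x then 0 else ENNReal.ofReal (g n x)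
    with hAcdef
  have h1 : Istar 𝒜 I ((t ∩ {x | a < f x}).indicator 1) ≤ ∑' n, Istar 𝒜 I (hA n) := by
    refine le_trans (Istar_mono fun x => ?_) (Istar_tsum_le _)
    by_cases hx : x ∈ t ∩ {x | a < f x}
    · have hx2 : a < f x := hx.2
      calc (t ∩ {x | a < f x}).indicator (1 : X → ℝ≥0∞) x = 1 := by simp [hx]
        _ ≤ ∑' n, ENNReal.ofReal (g n x) := by
            have := hc.2.2 x
            simpa [Set.indicator_of_mem hx.1] using this
        _ = ∑' n, hA n x := by
            congr 1; funext n; simp [hAdef, hx2]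
    · simp [hx]
  have h2 : Istar 𝒜 I ((t \ {x | a < f x}).indicator 1) ≤ ∑' n, Istar 𝒜 I (hAc n) := by
    refine le_trans (Istar_mono fun x => ?_) (Istar_tsum_le _)
    by_cases hx : x ∈ t \ {x | a < f x}
    · have hx2 : ¬ a < f x := hx.2
      calc (t \ {x | a < f x}).indicator (1 : X → ℝ≥0∞) x = 1 := by simp [hx]
        _ ≤ ∑' n, ENNReal.ofReal (g n x) := by
            have := hc.2.2 x
            simpa [Set.indicator_of_mem hx.1] using this
        _ = ∑' n, hAc n x := by
            congr 1; funext n; simp [hAcdef, hx2]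
    · simp [hx]
  calc Istar 𝒜 I ((t ∩ {x | a < f x}).indicator 1)
      + Istar 𝒜 I ((t \ {x | a < f x}).indicator 1)
      ≤ ∑' n, Istar 𝒜 I (hA n) + ∑' n, Istar 𝒜 I (hAc n) := add_le_add h1 h2
    _ = ∑' n, (Istar 𝒜 I (hA n) + Istar 𝒜 I (hAc n)) := ENNReal.tsum_add.symm
    _ ≤ ∑' n, ENNReal.ofReal (I (g n)) :=
        ENNReal.tsum_le_tsum fun n => Istar_split H hf a (hc.1 n) (fun x => hc.2.1 n x)

lemma borel_le_caratheodory :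
    (⨆ f ∈ 𝒜, MeasurableSpace.comap f (borel ℝ)) ≤ (mu H).caratheodory := by
  refine iSup₂_le fun f hf => ?_
  rw [borel_eq_generateFrom_Ioi, MeasurableSpace.comap_generateFrom]
  refine MeasurableSpace.generateFrom_le ?_
  rintro - ⟨-, ⟨a, rfl⟩, rfl⟩
  rw [OuterMeasure.isCaratheodory_iff]
  intro t
  have : f ⁻¹' Ioi a = {x | a < f x} := rfl
  rw [this]
  exact isCaratheodory_lt H hf a t

/-- The σ-algebra generated by `𝒜`. -/
def sigmaAlg (𝒜 : Set (X → ℝ)) : MeasurableSpace X :=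
  ⨆ f ∈ 𝒜, MeasurableSpace.comap f (borel ℝ)

omit H in
lemma measurable_of_mem {f : X → ℝ} (hf : f ∈ 𝒜) : Measurable[sigmaAlg 𝒜] f := by
  refine Measurable.of_comap_le ?_
  have h1 : MeasurableSpace.comap f (borel ℝ) ≤ sigmaAlg 𝒜 :=
    le_iSup₂ (f := fun g (_ : g ∈ 𝒜) => MeasurableSpace.comap g (borel ℝ)) f hf
  rwa [← BorelSpace.measurable_eq (α := ℝ)] at h1

omit H in
lemma ennreal_le_aux {A B : ℝ≥0∞} {M : ℝ}
    (h : ∀ δ : ℝ, 0 < δ → A ≤ B + ENNReal.ofReal (δ * M)) : A ≤ B := by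
  refine ENNReal.le_of_forall_pos_le_add fun ε hε _ => ?_
  rcases le_or_gt M 0 with hM | hM
  · have h1 := h 1 one_pos
    have h2 : ENNReal.ofReal (1 * M) = 0 := by
      rw [ENNReal.ofReal_eq_zero]; linarith
    rw [h2, add_zero] at h1
    exact h1.trans le_self_add
  · have h1 := h ((ε : ℝ) / M) (div_pos (by exact_mod_cast hε) hM)
    rw [div_mul_cancel₀ _ hM.ne'] at h1
    simpa using h1
lemma mu_univ_le : mu H (univ : Set X) ≤ ENNReal.ofReal (I (fun _ => 1)) := by
  rw [mu_apply]
  have h0 : (univ : Set X).indicator (1 : X → ℝ≥0∞)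
      = fun x => ENNReal.ofReal ((fun _ => (1:ℝ)) x) := by
    funext x; simp
  rw [h0, Istar_ofReal H H.one (fun _ => zero_le_one)]

set_option maxHeartbeats 1000000 in
lemma lintegral_ofReal_eq {f : X → ℝ} (hf : f ∈ 𝒜) (hf0 : ∀ x, 0 ≤ f x) :
    ∫⁻ x, ENNReal.ofReal (f x)
        ∂((mu H).toMeasure (ms := sigmaAlg 𝒜) (borel_le_caratheodory H))
      = ENNReal.ofReal (I f) := by
  letI ms : MeasurableSpace X := sigmaAlg 𝒜
  set ρ : Measure X := (mu H).toMeasure (ms := sigmaAlg 𝒜) (borel_le_caratheodory H)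
    with hρdef
  have hI1 : (0:ℝ) ≤ I (fun _ => 1) := H.Ipos _ H.one fun _ => zero_le_one
  have key : ∀ δ : ℝ, 0 < δ →
      (∫⁻ x, ENNReal.ofReal (f x) ∂ρ
          ≤ ENNReal.ofReal (I f) + ENNReal.ofReal (δ * I (fun _ => 1)))
      ∧ (ENNReal.ofReal (I f)
          ≤ (∫⁻ x, ENNReal.ofReal (f x) ∂ρ) + ENNReal.ofReal (δ * I (fun _ => 1))) := by
    intro δ hδ
    -- the layers of f of height δ
    set p : ℕ → X → ℝ := fun k => ((f - fun _ => (k:ℝ)*δ) ⊔ 0) ⊓ (fun _ => δ) with hpdef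
    have papp : ∀ k x, p k x = min (max (f x - (k:ℝ)*δ) 0) δ := fun k x => rfl
    have pmem : ∀ k, p k ∈ 𝒜 := fun k =>
      H.min' _ (H.max' _ (H.sub_mem hf (H.const_mem _)) _ H.zero_mem) _ (H.const_mem δ)
    have p0 : ∀ k, ∀ x, 0 ≤ p k x := fun k x => by
      rw [papp]; exact le_min (le_max_right _ _) hδ.le
    have pIpos : ∀ k, 0 ≤ I (p k) := fun k => H.Ipos _ (pmem k) (p0 k)
    -- partial sums are truncations
    have hpsum : ∀ K x, ∑ k ∈ Finset.range K, p k x = min (f x) ((K:ℝ)*δ) := by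
      intro K x
      induction K with
      | zero => simp [min_eq_right (hf0 x)]
      | succ K ih =>
          rw [Finset.sum_range_succ, ih, papp]
          push_cast
          rcases le_total (f x) ((K:ℝ)*δ) with h1 | h1 <;>
            rcases le_total (f x) (((K:ℝ)+1)*δ) with h2 | h2 <;>
            simp [min_def, max_def] <;> split_ifs <;> linarith
    have hsKmem : ∀ K, (fun x => ∑ k ∈ Finset.range K, p k x) ∈ 𝒜 :=
      H.partialSum_mem p pmem
    -- remainders
    set r : ℕ → X → ℝ := fun K => (f - fun _ => (K:ℝ)*δ) ⊔ 0 with hrdef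
    have rapp : ∀ K x, r K x = max (f x - (K:ℝ)*δ) 0 := fun K x => rfl
    have rmem : ∀ K, r K ∈ 𝒜 := fun K =>
      H.max' _ (H.sub_mem hf (H.const_mem _)) _ H.zero_mem
    have htendr : Tendsto (fun K => I (r K)) atTop (nhds 0) := by
      refine H.Icont r rmem (fun x K L hKL => ?_) (fun x => ?_)
      · simp only [rapp]
        have : (K:ℝ)*δ ≤ (L:ℝ)*δ :=
          mul_le_mul_of_nonneg_right (by exact_mod_cast hKL) hδ.le
        exact max_le_max (by linarith) le_rfl
      · obtain ⟨N, hN⟩ := exists_nat_ge (f x / δ)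
        refine tendsto_const_nhds.congr' ?_
        filter_upwards [eventually_ge_atTop N] with K hK
        have h1 : f x ≤ (K:ℝ)*δ := by
          have h2 : f x ≤ (N:ℝ)*δ := by
            rw [← div_le_iff₀ hδ] at *; linarith
          have h3 : (N:ℝ)*δ ≤ (K:ℝ)*δ :=
            mul_le_mul_of_nonneg_right (by exact_mod_cast hK) hδ.le
          linarith
        rw [rapp, max_eq_right (by linarith)]
    have hIfK : ∀ K, I f = I (fun x => ∑ k ∈ Finset.range K, p k x) + I (r K) := by
      intro K
      rw [← H.Iadd _ (hsKmem K) _ (rmem K)]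
      congr 1
      funext x
      simp only [Pi.add_apply]
      rw [hpsum, rapp]
      rcases le_total (f x) ((K:ℝ)*δ) with h1 | h1 <;>
        simp [min_def, max_def] <;> split_ifs <;> linarith
    -- the I-side series
    have hatsum : ∑' k, ENNReal.ofReal (I (p k)) = ENNReal.ofReal (I f) := by
      rw [ENNReal.tsum_eq_iSup_nat]
      have hpart : ∀ K, ∑ k ∈ Finset.range K, ENNReal.ofReal (I (p k))
          = ENNReal.ofReal (I (fun x => ∑ k ∈ Finset.range K, p k x)) := by
        intro K
        rw [← ENNReal.ofReal_sum_of_nonneg fun k _ => pIpos k, H.I_partialSum p pmem]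
      simp only [hpart]
      have hmono : Monotone fun K =>
          ENNReal.ofReal (I (fun x => ∑ k ∈ Finset.range K, p k x)) := by
        intro K L hKL
        refine ENNReal.ofReal_le_ofReal (H.I_mono (hsKmem K) (hsKmem L) fun x => ?_)
        exact Finset.sum_le_sum_of_subset_of_nonneg (Finset.range_subset_range.2 hKL)
          fun k _ _ => p0 k x
      have htendsto : Tendsto (fun K =>
          ENNReal.ofReal (I (fun x => ∑ k ∈ Finset.range K, p k x))) atTop
          (nhds (ENNReal.ofReal (I f))) := by
        refine ENNReal.tendsto_ofReal ?_
        have h1 : (fun K => I (fun x => ∑ k ∈ Finset.range K, p k x))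
            = fun K => I f - I (r K) := by
          funext K; rw [hIfK K]; ring
        rw [h1]
        simpa using tendsto_const_nhds.sub htendr
      exact tendsto_nhds_unique (tendsto_atTop_iSup hmono) htendsto
    -- pointwise series
    have hptw : ∀ x, ENNReal.ofReal (f x) = ∑' k, ENNReal.ofReal (p k x) := by
      intro x
      rw [ENNReal.tsum_eq_iSup_nat]
      have hpart : ∀ K, ∑ k ∈ Finset.range K, ENNReal.ofReal (p k x)
          = ENNReal.ofReal (min (f x) ((K:ℝ)*δ)) := by
        intro K
        rw [← ENNReal.ofReal_sum_of_nonneg fun k _ => p0 k x]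
        congr 1
        exact hpsum K x
      simp only [hpart]
      refine le_antisymm ?_ (iSup_le fun K => ENNReal.ofReal_le_ofReal (min_le_left _ _))
      obtain ⟨N, hN⟩ := exists_nat_ge (f x / δ)
      have h1 : f x ≤ (N:ℝ)*δ := by rwa [div_le_iff₀ hδ] at hN
      exact le_iSup_of_le N (by rw [min_eq_left h1])
    -- the sets
    set C : ℕ → Set X := fun k => {x | (k:ℝ)*δ < f x} with hCdef
    have measC : ∀ k, MeasurableSet[sigmaAlg 𝒜] (C k) :=
      fun k => measurable_of_mem hf measurableSet_Ioi
    have hρC : ∀ k, ρ (C k) = mu H (C k) :=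
      fun k => toMeasure_apply _ _ (measC k)
    -- pointwise bounds
    have hub : ∀ k x, ENNReal.ofReal (p k x)
        ≤ ENNReal.ofReal δ * (C k).indicator 1 x := by
      intro k x
      by_cases hx : x ∈ C k
      · rw [Set.indicator_of_mem hx, Pi.one_apply, mul_one]
        exact ENNReal.ofReal_le_ofReal (by rw [papp]; exact min_le_right _ _)
      · rw [Set.indicator_of_notMem hx, mul_zero]
        have hx2 : f x ≤ (k:ℝ)*δ := not_lt.1 hx
        rw [papp, max_eq_right (by linarith), min_eq_left hδ.le]
        simp
    have hlb : ∀ k x, ENNReal.ofReal δ * (C (k+1)).indicator 1 x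
        ≤ ENNReal.ofReal (p k x) := by
      intro k x
      by_cases hx : x ∈ C (k+1)
      · rw [Set.indicator_of_mem hx, Pi.one_apply, mul_one]
        have hx2 : ((k:ℝ)+1)*δ < f x := by
          have := hx
          simp only [hCdef, mem_setOf_eq] at this
          push_cast at this
          linarith
        refine ENNReal.ofReal_le_ofReal ?_
        rw [papp, max_eq_left (by nlinarith), le_min_iff]
        constructor <;> nlinarith
      · rw [Set.indicator_of_notMem hx, mul_zero]
        exact zero_le
    -- per-piece bounds, lintegral side
    have hmeas_ind : ∀ k, Measurable[sigmaAlg 𝒜] ((C k).indicator (1 : X → ℝ≥0∞)) :=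
      fun k => measurable_one.indicator (measC k)
    have hb_ub : ∀ k, ∫⁻ x, ENNReal.ofReal (p k x) ∂ρ ≤ ENNReal.ofReal δ * mu H (C k) := by
      intro k
      calc ∫⁻ x, ENNReal.ofReal (p k x) ∂ρ
          ≤ ∫⁻ x, ENNReal.ofReal δ * (C k).indicator 1 x ∂ρ := lintegral_mono (hub k)
        _ = ENNReal.ofReal δ * ∫⁻ x, (C k).indicator 1 x ∂ρ :=
            lintegral_const_mul _ (hmeas_ind k)
        _ = ENNReal.ofReal δ * ρ (C k) := by rw [lintegral_indicator_one (measC k)]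
        _ = ENNReal.ofReal δ * mu H (C k) := by rw [hρC]
    have hb_lb : ∀ k, ENNReal.ofReal δ * mu H (C (k+1)) ≤ ∫⁻ x, ENNReal.ofReal (p k x) ∂ρ := by
      intro k
      calc ENNReal.ofReal δ * mu H (C (k+1))
          = ENNReal.ofReal δ * ρ (C (k+1)) := by rw [hρC]
        _ = ENNReal.ofReal δ * ∫⁻ x, (C (k+1)).indicator 1 x ∂ρ := by
            rw [lintegral_indicator_one (measC (k+1))]
        _ = ∫⁻ x, ENNReal.ofReal δ * (C (k+1)).indicator 1 x ∂ρ :=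
            (lintegral_const_mul _ (hmeas_ind (k+1))).symm
        _ ≤ ∫⁻ x, ENNReal.ofReal (p k x) ∂ρ := lintegral_mono (hlb k)
    -- lintegral series
    have hbsum : ∫⁻ x, ENNReal.ofReal (f x) ∂ρ = ∑' k, ∫⁻ x, ENNReal.ofReal (p k x) ∂ρ := by
      rw [← lintegral_tsum (f := fun k x => ENNReal.ofReal (p k x)) fun k =>
        (ENNReal.measurable_ofReal.comp (measurable_of_mem (pmem k))).aemeasurable]
      exact lintegral_congr fun x => hptw x
    -- per-piece bounds, I side
    have ha_ub : ∀ k, ENNReal.ofReal (I (p k)) ≤ ENNReal.ofReal δ * mu H (C k) := by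
      intro k
      rw [← Istar_ofReal H (pmem k) (p0 k)]
      calc Istar 𝒜 I (fun x => ENNReal.ofReal (p k x))
          ≤ Istar 𝒜 I (fun x => ENNReal.ofReal δ * (C k).indicator 1 x) := Istar_mono (hub k)
        _ ≤ ENNReal.ofReal δ * Istar 𝒜 I ((C k).indicator 1) := Istar_smul_le H δ hδ _
        _ = ENNReal.ofReal δ * mu H (C k) := rfl
    have hδδ : ENNReal.ofReal δ * ENNReal.ofReal δ⁻¹ = 1 := by
      rw [← ENNReal.ofReal_mul hδ.le, mul_inv_cancel₀ hδ.ne', ENNReal.ofReal_one]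
    have ha_lb : ∀ k, ENNReal.ofReal δ * mu H (C (k+1)) ≤ ENNReal.ofReal (I (p k)) := by
      intro k
      have h3 : (fun x => ENNReal.ofReal δ⁻¹ * (ENNReal.ofReal δ * (C (k+1)).indicator 1 x))
          = fun x => (C (k+1)).indicator 1 x := by
        funext x
        rw [← mul_assoc, ← ENNReal.ofReal_mul (inv_pos.2 hδ).le,
          inv_mul_cancel₀ hδ.ne', ENNReal.ofReal_one, one_mul]
      have h1 : Istar 𝒜 I ((C (k+1)).indicator 1)
          ≤ ENNReal.ofReal δ⁻¹ * Istar 𝒜 I (fun x => ENNReal.ofReal δ * (C (k+1)).indicator 1 x) := by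
        have h2 := Istar_smul_le H δ⁻¹ (inv_pos.2 hδ)
          (fun x => ENNReal.ofReal δ * (C (k+1)).indicator 1 x)
        rw [h3] at h2
        exact h2.trans_eq (by rfl)
      calc ENNReal.ofReal δ * mu H (C (k+1))
          = ENNReal.ofReal δ * Istar 𝒜 I ((C (k+1)).indicator 1) := rfl
        _ ≤ ENNReal.ofReal δ * (ENNReal.ofReal δ⁻¹
            * Istar 𝒜 I (fun x => ENNReal.ofReal δ * (C (k+1)).indicator 1 x)) := by gcongr
        _ = Istar 𝒜 I (fun x => ENNReal.ofReal δ * (C (k+1)).indicator 1 x) := by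
            rw [← mul_assoc, hδδ, one_mul]
        _ ≤ Istar 𝒜 I (fun x => ENNReal.ofReal (p k x)) := Istar_mono (hlb k)
        _ = ENNReal.ofReal (I (p k)) := Istar_ofReal H (pmem k) (p0 k)
    -- the error term
    have hτ : ENNReal.ofReal δ * mu H (C 0) ≤ ENNReal.ofReal (δ * I (fun _ => 1)) := by
      rw [ENNReal.ofReal_mul hδ.le]
      exact mul_le_mul_right ((measure_mono (subset_univ _)).trans (mu_univ_le H)) _
    -- shift identity
    have hshift : ∑' k, (ENNReal.ofReal δ * mu H (C k))
        = ENNReal.ofReal δ * mu H (C 0) + ∑' k, (ENNReal.ofReal δ * mu H (C (k+1))) :=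
      tsum_eq_zero_add' ENNReal.summable
    constructor
    · calc ∫⁻ x, ENNReal.ofReal (f x) ∂ρ
          = ∑' k, ∫⁻ x, ENNReal.ofReal (p k x) ∂ρ := hbsum
        _ ≤ ∑' k, (ENNReal.ofReal δ * mu H (C k)) := ENNReal.tsum_le_tsum hb_ub
        _ = ENNReal.ofReal δ * mu H (C 0)
            + ∑' k, (ENNReal.ofReal δ * mu H (C (k+1))) := hshift
        _ ≤ ENNReal.ofReal (δ * I (fun _ => 1)) + ∑' k, ENNReal.ofReal (I (p k)) :=
            add_le_add hτ (ENNReal.tsum_le_tsum ha_lb)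
        _ = ENNReal.ofReal (I f) + ENNReal.ofReal (δ * I (fun _ => 1)) := by
            rw [hatsum, add_comm]
    · calc ENNReal.ofReal (I f)
          = ∑' k, ENNReal.ofReal (I (p k)) := hatsum.symm
        _ ≤ ∑' k, (ENNReal.ofReal δ * mu H (C k)) := ENNReal.tsum_le_tsum ha_ub
        _ = ENNReal.ofReal δ * mu H (C 0)
            + ∑' k, (ENNReal.ofReal δ * mu H (C (k+1))) := hshift
        _ ≤ ENNReal.ofReal (δ * I (fun _ => 1))
            + ∑' k, ∫⁻ x, ENNReal.ofReal (p k x) ∂ρ :=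
            add_le_add hτ (ENNReal.tsum_le_tsum hb_lb)
        _ = (∫⁻ x, ENNReal.ofReal (f x) ∂ρ) + ENNReal.ofReal (δ * I (fun _ => 1)) := by
            rw [← hbsum, add_comm]
  exact le_antisymm
    (ennreal_le_aux fun δ hδ => (key δ hδ).1)
    (ennreal_le_aux fun δ hδ => (key δ hδ).2)

lemma integral_eq {f : X → ℝ} (hf : f ∈ 𝒜) :
    I f = ∫ x, f x ∂((mu H).toMeasure (ms := sigmaAlg 𝒜) (borel_le_caratheodory H)) := by
  letI ms : MeasurableSpace X := sigmaAlg 𝒜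
  set ρ : Measure X := (mu H).toMeasure (ms := sigmaAlg 𝒜) (borel_le_caratheodory H)
    with hρdef
  set fp : X → ℝ := f ⊔ 0 with hfpdef
  set fm : X → ℝ := (-f) ⊔ 0 with hfmdef
  have hfp : fp ∈ 𝒜 := H.max' _ hf _ H.zero_mem
  have hfm : fm ∈ 𝒜 := H.max' _ (H.neg_mem hf) _ H.zero_mem
  have hfp0 : ∀ x, 0 ≤ fp x := fun x => le_max_right _ _
  have hfm0 : ∀ x, 0 ≤ fm x := fun x => le_max_right _ _
  have key : ∀ g : X → ℝ, g ∈ 𝒜 → (∀ x, 0 ≤ g x) → Integrable g ρ ∧ ∫ x, g x ∂ρ = I g := by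
    intro g hg hg0
    have hmeas : Measurable[sigmaAlg 𝒜] g := measurable_of_mem hg
    have hlint : ∫⁻ x, ENNReal.ofReal (g x) ∂ρ = ENNReal.ofReal (I g) :=
      lintegral_ofReal_eq H hg hg0
    have hint : Integrable g ρ := by
      constructor
      · exact hmeas.aestronglyMeasurable
      · rw [hasFiniteIntegral_iff_ofReal (Eventually.of_forall hg0), hlint]
        exact ENNReal.ofReal_lt_top
    refine ⟨hint, ?_⟩
    rw [integral_eq_lintegral_of_nonneg_ae (Eventually.of_forall hg0)
      hmeas.aestronglyMeasurable, hlint, ENNReal.toReal_ofReal (H.Ipos g hg hg0)]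
  obtain ⟨hintp, hIp⟩ := key fp hfp hfp0
  obtain ⟨hintm, hIm⟩ := key fm hfm hfm0
  have hdecomp : f = fp - fm := by
    funext x
    simp only [hfpdef, hfmdef, Pi.sub_apply, Pi.sup_apply, Pi.neg_apply, Pi.zero_apply]
    rcases le_total (f x) 0 with h | h <;> simp [max_def] <;> split_ifs <;> linarith
  have hIf : I f = I fp - I fm := by
    have h1 : fp = f + fm := by
      funext x
      simp only [hfpdef, hfmdef, Pi.add_apply, Pi.sup_apply, Pi.neg_apply, Pi.zero_apply]
      rcases le_total (f x) 0 with h | h <;> simp [max_def] <;> split_ifs <;> linarith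
    have h2 : I fp = I f + I fm := by rw [h1, H.Iadd f hf fm hfm]
    linarith
  rw [hIf, hdecomp]
  have : ∫ x, (fp - fm) x ∂ρ = ∫ x, (fp x - fm x) ∂ρ := rfl
  rw [this, integral_sub hintp hintm, hIp, hIm]

end DaniellStone

open DaniellStone in
theorem stmt_14 {X : Type*} (𝒜 : Set (X → ℝ))
    (h1 : (fun _ => (1 : ℝ)) ∈ 𝒜)
    (hadd : ∀ f ∈ 𝒜, ∀ g ∈ 𝒜, f + g ∈ 𝒜)
    (hsmul : ∀ (c : ℝ), ∀ f ∈ 𝒜, c • f ∈ 𝒜)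
    (hmax : ∀ f ∈ 𝒜, ∀ g ∈ 𝒜, f ⊔ g ∈ 𝒜)
    (hmin : ∀ f ∈ 𝒜, ∀ g ∈ 𝒜, f ⊓ g ∈ 𝒜)
    (I : (X → ℝ) → ℝ)
    (hIadd : ∀ f ∈ 𝒜, ∀ g ∈ 𝒜, I (f + g) = I f + I g)
    (hIsmul : ∀ (c : ℝ), ∀ f ∈ 𝒜, I (c • f) = c * I f)
    (hIpos : ∀ f ∈ 𝒜, (∀ x, 0 ≤ f x) → 0 ≤ I f)
    (hIcont : ∀ f : ℕ → X → ℝ, (∀ n, f n ∈ 𝒜) →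
      (∀ x, Antitone fun n => f n x) →
      (∀ x, Tendsto (fun n => f n x) atTop (nhds 0)) →
      Tendsto (fun n => I (f n)) atTop (nhds 0)) :
    ∃ ρ : @Measure X (⨆ f ∈ 𝒜, MeasurableSpace.comap f (borel ℝ)),
      ∀ f ∈ 𝒜, I f = ∫ x, f x ∂ρ := by
  have H : Hyp 𝒜 I := ⟨h1, hadd, hsmul, hmax, hmin, hIadd, hIsmul, hIpos, hIcont⟩
  exact ⟨(mu H).toMeasure (ms := sigmaAlg 𝒜) (borel_le_caratheodory H),
    fun f hf => integral_eq H hf⟩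
end
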